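/- arXiv:1808.06182 — 8 statements merged into one kernel-verified Lean document; each statement's English description precedes it below -/
import Mathlib

section
/- Let m ≤ n be positive integers and let E ⊆ U × V be the edge set of a bipartite graph with parts U of size m and V of size n. If the graph is C₄-free, then |E| ≤ m·n^{1/2} + n. -/
theorem c4free_bipartite_bound
    {U V : Type*} [Fintype U] [Fintype V] (m n : ℕ)
    (hm : 0 < m) (hmn : m ≤ n)
    (hU : Fintype.card U = m) (hV : Fintype.card V = n)
    (E : Finset (U × V))
    (hC4 : ¬ ∃ (u u' : U) (v v' : V), u ≠ u' ∧ v ≠ v' ∧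
      (u, v) ∈ E ∧ (u, v') ∈ E ∧ (u', v) ∈ E ∧ (u', v') ∈ E) :
    (E.card : ℝ) ≤ (m : ℝ) * (n : ℝ) ^ ((1 : ℝ)/2) + (n : ℝ) := by
  classical
  set d : V → ℕ := fun v => (E.filter (fun p => p.2 = v)).card with hd
  -- sum of degrees = card E
  have hsum : ∑ v : V, d v = E.card :=
    (Finset.card_eq_sum_card_fiberwise (s := E) (f := fun p : U × V => p.2)
      (t := Finset.univ) (fun x _ => Finset.mem_univ _)).symm
  -- S : pairs of edges sharing the same V-vertex
  set S : Finset ((U × V) × (U × V)) :=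
    (E ×ˢ E).filter (fun pq => pq.1.2 = pq.2.2) with hS
  have hScard : S.card = ∑ v : V, (d v) ^ 2 := by
    rw [Finset.card_eq_sum_card_fiberwise (s := S) (f := fun pq : (U × V) × (U × V) => pq.1.2)
      (t := Finset.univ) (fun x _ => Finset.mem_univ _)]
    refine Finset.sum_congr rfl fun v _ => ?_
    have : S.filter (fun pq => pq.1.2 = v) =
        (E.filter (fun p => p.2 = v)) ×ˢ (E.filter (fun p => p.2 = v)) := by
      ext ⟨p, q⟩
      simp only [hS, Finset.mem_filter, Finset.mem_product]
      constructor
      · rintro ⟨⟨⟨hp, hq⟩, h1⟩, h2⟩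
        exact ⟨⟨hp, h2⟩, hq, h1 ▸ h2⟩
      · rintro ⟨⟨hp, hp2⟩, hq, hq2⟩
        exact ⟨⟨⟨hp, hq⟩, hp2.trans hq2.symm⟩, hp2⟩
    rw [this, Finset.card_product, sq]
  -- T : such pairs with distinct U-vertices
  set T : Finset ((U × V) × (U × V)) := S.filter (fun pq => pq.1.1 ≠ pq.2.1) with hT
  have hdiag : S.filter (fun pq => ¬ pq.1.1 ≠ pq.2.1) = E.image (fun p => (p, p)) := by
    ext ⟨p, q⟩
    simp only [hS, Finset.mem_filter, Finset.mem_product, Finset.mem_image, not_not,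
      Prod.mk.injEq]
    constructor
    · rintro ⟨⟨⟨hp, hq⟩, h1⟩, h2⟩
      exact ⟨p, hp, rfl, Prod.ext h2 h1⟩
    · rintro ⟨r, hr, rfl, rfl⟩
      exact ⟨⟨⟨hr, hr⟩, rfl⟩, rfl⟩
  have hsplit : T.card + E.card = S.card := by
    have := Finset.card_filter_add_card_filter_not
      (s := S) (p := fun pq => pq.1.1 ≠ pq.2.1)
    rw [hdiag, Finset.card_image_of_injective _ (fun a b h => (Prod.mk.injEq _ _ _ _ ▸ h).1)]
      at this
    exact this
  -- T injects into U × U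
  have hTcard : T.card ≤ m * m := by
    have hinj : Set.InjOn (fun pq : (U × V) × (U × V) => (pq.1.1, pq.2.1)) T := by
      rintro ⟨⟨u1, v1⟩, ⟨u2, v2⟩⟩ h1 ⟨⟨u1', v1'⟩, ⟨u2', v2'⟩⟩ h2 heq
      simp only [hT, hS, Finset.mem_coe, Finset.mem_filter, Finset.mem_product] at h1 h2
      obtain ⟨⟨⟨he1, he2⟩, hv : v1 = v2⟩, hne⟩ := h1
      obtain ⟨⟨⟨he1', he2'⟩, hv' : v1' = v2'⟩, hne'⟩ := h2
      simp only [Prod.mk.injEq] at heq ⊢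
      obtain ⟨hu1, hu2⟩ := heq
      subst hu1; subst hu2; subst hv; subst hv'
      by_cases hvv : v1 = v1'
      · exact ⟨⟨rfl, hvv⟩, rfl, hvv⟩
      · exact absurd ⟨u1, u2, v1, v1', hne, hvv, he1, he1', he2, he2'⟩ hC4
    calc T.card ≤ (Finset.univ : Finset (U × U)).card :=
          Finset.card_le_card_of_injOn _ (fun x _ => Finset.mem_univ _) hinj
      _ = m * m := by simp [Finset.card_univ, hU]
  -- Cauchy–Schwarz
  have hCS : ((E.card : ℝ)) ^ 2 ≤ (n : ℝ) * ∑ v : V, ((d v : ℝ)) ^ 2 := by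
    have h := sq_sum_le_card_mul_sum_sq (s := (Finset.univ : Finset V))
      (f := fun v => ((d v : ℕ) : ℝ))
    rw [Finset.card_univ, hV] at h
    calc ((E.card : ℝ)) ^ 2 = (∑ v : V, ((d v : ℕ) : ℝ)) ^ 2 := by
          rw [← hsum]; push_cast; ring
      _ ≤ (n : ℝ) * ∑ v : V, ((d v : ℝ)) ^ 2 := h
  -- Combine: e^2 ≤ n * (T.card + e) ≤ n*(m*m + e)
  have hsq : ((E.card : ℝ)) ^ 2 ≤ (n : ℝ) * ((m : ℝ) * m + E.card) := by
    have h1 : (∑ v : V, ((d v : ℝ)) ^ 2) = ((S.card : ℕ) : ℝ) := by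
      rw [hScard]; push_cast; ring
    have h2 : (S.card : ℝ) ≤ (m : ℝ) * m + E.card := by
      rw [← hsplit]; push_cast
      have : (T.card : ℝ) ≤ (m : ℝ) * m := by exact_mod_cast hTcard
      linarith
    calc ((E.card : ℝ)) ^ 2 ≤ (n : ℝ) * ∑ v : V, ((d v : ℝ)) ^ 2 := hCS
      _ = (n : ℝ) * S.card := by rw [h1]
      _ ≤ (n : ℝ) * ((m : ℝ) * m + E.card) := by
          have hn : (0 : ℝ) ≤ n := by positivity
          nlinarith
  -- final arithmetic
  set s : ℝ := (n : ℝ) ^ ((1 : ℝ)/2) with hs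
  have hs0 : 0 ≤ s := Real.rpow_nonneg (by positivity) _
  have hs2 : s ^ 2 = n := by
    rw [hs, ← Real.rpow_natCast ((n : ℝ) ^ ((1:ℝ)/2)) 2, ← Real.rpow_mul (by positivity)]
    norm_num
  by_contra hcon
  push_neg at hcon
  have he : (m : ℝ) * s + n < E.card := hcon
  have hn1 : (1 : ℝ) ≤ n := by exact_mod_cast (hm.trans_le hmn)
  have hm0 : (0 : ℝ) < m := by exact_mod_cast hm
  nlinarith [mul_pos hm0 (lt_of_lt_of_le (by norm_num : (0:ℝ) < 1)
    (by nlinarith : (1:ℝ) ≤ s)), sq_nonneg ((E.card : ℝ) - (n : ℝ) - (m : ℝ) * s)]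
end

section
/- Let m ≤ n be positive integers and let E ⊆ U × V be the edge set of a bipartite graph with parts U of size m and V of size n. If the graph is C₆-free, then |E| ≤ m²/2 + 2n. -/
open Finset

lemma arith1 (d : ℕ) (hd : 3 ≤ d) : 2 * (d - 2) ≤ d.choose 2 := by
  rw [Nat.choose_two_right]
  rw [Nat.le_div_iff_mul_le (by norm_num : 0 < 2)]
  obtain ⟨e, rfl⟩ : ∃ e, d = e + 3 := ⟨d - 3, by omega⟩
  have h : (e + 3) * (e + 3 - 1) = e * e + 5 * e + 6 := by
    have : e + 3 - 1 = e + 2 := by omega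
    rw [this]; ring
  rw [h]
  have : (e + 3 - 2) = e + 1 := by omega
  rw [this]
  nlinarith [Nat.zero_le (e * e)]

lemma arith2 (s t : ℕ) (hs : 2 ≤ s) (ht : 1 ≤ t) : s + t - 2 ≤ s * t := by
  obtain ⟨a, rfl⟩ : ∃ a, s = a + 2 := ⟨s - 2, by omega⟩
  obtain ⟨b, rfl⟩ : ∃ b, t = b + 1 := ⟨t - 1, by omega⟩
  have h : (a + 2) * (b + 1) = a * b + a + 2 * b + 2 := by ring
  rw [h]
  have := Nat.zero_le (a * b)
  omega

lemma c6_core {U V : Type*} [DecidableEq U] [DecidableEq V] (N : V → Finset U)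
    (hrain : ∀ v₁ v₂ v₃ : V, v₁ ≠ v₂ → v₁ ≠ v₃ → v₂ ≠ v₃ → ∀ a b c : U,
      a ≠ b → a ≠ c → b ≠ c → a ∈ N v₁ → b ∈ N v₁ → b ∈ N v₂ → c ∈ N v₂ →
      c ∈ N v₃ → a ∈ N v₃ → False) :
    ∀ (k : ℕ) (W : Finset V), W.card ≤ k → (∀ v ∈ W, 3 ≤ (N v).card) →
      ∑ v ∈ W, ((N v).card - 2) ≤ (W.biUnion fun v => (N v).powersetCard 2).card := by
  intro k
  induction k with
  | zero =>
    intro W hW _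
    have : W = ∅ := Finset.card_eq_zero.mp (by omega)
    subst this; simp
  | succ k ih =>
    intro W hcard hdeg
    rcases W.eq_empty_or_nonempty with rfl | hne
    · simp
    obtain ⟨vk, hvk, hmax⟩ := W.exists_max_image (fun v => (N v).card) hne
    have hd3 : 3 ≤ (N vk).card := hdeg vk hvk
    by_cases hdup : ∃ j ∈ W.erase vk, N j = N vk
    · -- Case (i): duplicate neighborhood
      obtain ⟨j, hjW, hjN⟩ := hdup
      have hjvk : j ≠ vk := (Finset.mem_erase.mp hjW).1
      have hsep : ∀ l ∈ (W.erase vk).erase j, ((N vk) ∩ (N l)).card ≤ 1 := by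
        intro l hl
        by_contra hcon
        push_neg at hcon
        obtain ⟨a, ha, b, hb, hab⟩ := Finset.one_lt_card.mp hcon
        have haK : a ∈ N vk := (Finset.mem_inter.mp ha).1
        have haL : a ∈ N l := (Finset.mem_inter.mp ha).2
        have hbK : b ∈ N vk := (Finset.mem_inter.mp hb).1
        have hbL : b ∈ N l := (Finset.mem_inter.mp hb).2
        have hcex : ((N vk) \ {a, b}).Nonempty := by
          rw [Finset.sdiff_nonempty]
          intro hsub
          have h1 := Finset.card_le_card hsub
          have h2 : ({a, b} : Finset U).card ≤ 2 :=
            le_trans (Finset.card_insert_le _ _) (by simp)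
          omega
        obtain ⟨c, hc⟩ := hcex
        have hcK : c ∈ N vk := (Finset.mem_sdiff.mp hc).1
        have hca : c ≠ a := fun h => (Finset.mem_sdiff.mp hc).2 (by simp [h])
        have hcb : c ≠ b := fun h => (Finset.mem_sdiff.mp hc).2 (by simp [h])
        have hlvk : l ≠ vk := (Finset.mem_erase.mp (Finset.mem_erase.mp hl).2).1
        have hlj : l ≠ j := (Finset.mem_erase.mp hl).1
        exact hrain l vk j hlvk hlj (Ne.symm hjvk) a b c hab hca.symm hcb.symm
          haL hbL hbK hcK (hjN ▸ hcK) (hjN ▸ haK)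
      have hbU : W.biUnion (fun v => (N v).powersetCard 2) =
          (N vk).powersetCard 2 ∪ ((W.erase vk).erase j).biUnion (fun v => (N v).powersetCard 2) := by
        conv_lhs => rw [← Finset.insert_erase hvk]
        rw [Finset.biUnion_insert]
        conv_lhs => rw [← Finset.insert_erase hjW]
        rw [Finset.biUnion_insert, hjN, ← Finset.union_assoc, Finset.union_self]
      have hcard2 : ((N vk).powersetCard 2 ∪ ((W.erase vk).erase j).biUnion (fun v => (N v).powersetCard 2)).card
          = ((N vk).powersetCard 2).card + (((W.erase vk).erase j).biUnion (fun v => (N v).powersetCard 2)).card := by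
        rw [Finset.card_union_of_disjoint]
        rw [Finset.disjoint_left]
        intro p hp hmem
        obtain ⟨l, hl, hpl⟩ := Finset.mem_biUnion.mp hmem
        rw [Finset.mem_powersetCard] at hp hpl
        have hsub : p ⊆ (N vk) ∩ (N l) := Finset.subset_inter hp.1 hpl.1
        have := Finset.card_le_card hsub
        have := hsep l hl
        omega
      have hWcard : ((W.erase vk).erase j).card ≤ k := by
        have h1 := Finset.card_erase_of_mem hvk
        have h2 := Finset.card_erase_of_mem hjW
        omega
      have hih := ih ((W.erase vk).erase j) hWcard
        (fun v hv => hdeg v (Finset.mem_of_mem_erase (Finset.mem_of_mem_erase hv)))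
      have hsum : ∑ v ∈ W, ((N v).card - 2) =
          ((N vk).card - 2) + ((N j).card - 2) + ∑ v ∈ (W.erase vk).erase j, ((N v).card - 2) := by
        rw [← Finset.add_sum_erase W _ hvk, ← Finset.add_sum_erase (W.erase vk) _ hjW]
        ring
      rw [hjN] at hsum
      have hpairs : 2 * ((N vk).card - 2) ≤ ((N vk).powersetCard 2).card := by
        rw [Finset.card_powersetCard]
        exact arith1 _ hd3
      rw [hsum, hbU, hcard2]
      omega
    · -- Case (ii): N vk not duplicated
      push_neg at hdup
      have hbU : W.biUnion (fun v => (N v).powersetCard 2) =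
          (N vk).powersetCard 2 ∪ (W.erase vk).biUnion (fun v => (N v).powersetCard 2) := by
        conv_lhs => rw [← Finset.insert_erase hvk]
        rw [Finset.biUnion_insert]
      have hproper : ∀ j ∈ W.erase vk, (N vk) ∩ (N j) ≠ N vk := by
        intro j hj hcon
        have hsub : N vk ⊆ N j := by
          intro x hx
          have hx2 : x ∈ (N vk) ∩ (N j) := by rw [hcon]; exact hx
          exact (Finset.mem_inter.mp hx2).2
        have hle : (N j).card ≤ (N vk).card := hmax j (Finset.mem_of_mem_erase hj)
        have : N vk = N j := Finset.eq_of_subset_of_card_le hsub hle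
        exact hdup j hj this.symm
      have hfresh : (N vk).card - 2 ≤
          ((N vk).powersetCard 2 \ (W.erase vk).biUnion (fun v => (N v).powersetCard 2)).card := by
        by_cases hbig : ∃ j ∈ W.erase vk, 2 ≤ ((N vk) ∩ (N j)).card
        · obtain ⟨j0, hj0, hs2⟩ := hbig
          have hSsub : (N vk) ∩ (N j0) ⊆ N vk := Finset.inter_subset_left
          have hSlt : ((N vk) ∩ (N j0)).card < (N vk).card := by
            rcases lt_or_eq_of_le (Finset.card_le_card hSsub) with h | h
            · exact h
            · exact absurd (Finset.eq_of_subset_of_card_le hSsub (le_of_eq h.symm))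
                (hproper j0 hj0)
          have hXsub : (((N vk) ∩ (N j0)) ×ˢ ((N vk) \ ((N vk) ∩ (N j0)))).image
              (fun p => ({p.1, p.2} : Finset U)) ⊆
              (N vk).powersetCard 2 \ (W.erase vk).biUnion (fun v => (N v).powersetCard 2) := by
            intro p hp
            rw [Finset.mem_image] at hp
            obtain ⟨⟨y, z⟩, hyz, rfl⟩ := hp
            rw [Finset.mem_product] at hyz
            obtain ⟨hy, hz⟩ := hyz
            have hzK : z ∈ N vk := (Finset.mem_sdiff.mp hz).1
            have hzS : z ∉ (N vk) ∩ (N j0) := (Finset.mem_sdiff.mp hz).2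
            have hyz' : y ≠ z := fun h => hzS (h ▸ hy)
            rw [Finset.mem_sdiff]
            constructor
            · rw [Finset.mem_powersetCard]
              constructor
              · intro x hx
                rcases Finset.mem_insert.mp hx with rfl | hx
                · exact hSsub hy
                · rw [Finset.mem_singleton] at hx; exact hx ▸ hzK
              · rw [Finset.card_insert_of_notMem (by simp [hyz']), Finset.card_singleton]
            · intro hmem
              obtain ⟨l, hl, hpl⟩ := Finset.mem_biUnion.mp hmem
              rw [Finset.mem_powersetCard] at hpl
              have hyl : y ∈ N l := hpl.1 (by simp)
              have hzl : z ∈ N l := hpl.1 (by simp)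
              have hlj0 : l ≠ j0 := by
                rintro rfl
                exact hzS (Finset.mem_inter.mpr ⟨hzK, hzl⟩)
              obtain ⟨c, hcS, hcy⟩ : ∃ c ∈ (N vk) ∩ (N j0), c ≠ y := by
                obtain ⟨a, ha, b, hb, hab⟩ := Finset.one_lt_card.mp hs2
                rcases eq_or_ne a y with rfl | h
                · exact ⟨b, hb, fun h => hab h.symm⟩
                · exact ⟨a, ha, h⟩
              have hcz : c ≠ z := fun h => hzS (h ▸ hcS)
              have hlvk : l ≠ vk := (Finset.mem_erase.mp hl).1
              have hj0vk : j0 ≠ vk := (Finset.mem_erase.mp hj0).1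
              exact hrain l j0 vk hlj0 hlvk hj0vk z y c (Ne.symm hyz') (Ne.symm hcz)
                (Ne.symm hcy) hzl hyl ((Finset.mem_inter.mp hy).2)
                ((Finset.mem_inter.mp hcS).2) ((Finset.mem_inter.mp hcS).1) hzK
          have hXcard : ((((N vk) ∩ (N j0)) ×ˢ ((N vk) \ ((N vk) ∩ (N j0)))).image
              (fun p => ({p.1, p.2} : Finset U))).card =
              ((N vk) ∩ (N j0)).card * ((N vk).card - ((N vk) ∩ (N j0)).card) := by
            rw [Finset.card_image_of_injOn, Finset.card_product, Finset.card_sdiff_of_subset hSsub]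
            intro p hp q hq hpq
            rw [Finset.mem_coe, Finset.mem_product] at hp hq
            have hp2 : p.2 ∉ (N vk) ∩ (N j0) := (Finset.mem_sdiff.mp hp.2).2
            have hq2 : q.2 ∉ (N vk) ∩ (N j0) := (Finset.mem_sdiff.mp hq.2).2
            have hpq' : ({p.1, p.2} : Finset U) = {q.1, q.2} := hpq
            have h1 : p.1 ∈ ({q.1, q.2} : Finset U) := by rw [← hpq']; simp
            have h2 : p.2 ∈ ({q.1, q.2} : Finset U) := by rw [← hpq']; simp
            have hp1 : p.1 = q.1 := by
              rcases Finset.mem_insert.mp h1 with h | h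
              · exact h
              · rw [Finset.mem_singleton] at h
                exact absurd (h ▸ hp.1) hq2
            have hq1 : p.2 = q.2 := by
              rcases Finset.mem_insert.mp h2 with h | h
              · exact absurd (h ▸ hp2) (fun _ => hp2 (h ▸ hq.1))
              · exact Finset.mem_singleton.mp h
            exact Prod.ext hp1 hq1
          have hle := Finset.card_le_card hXsub
          rw [hXcard] at hle
          have harith := arith2 ((N vk) ∩ (N j0)).card ((N vk).card - ((N vk) ∩ (N j0)).card)
            hs2 (by omega)
          omega
        · push_neg at hbig
          have heq : (N vk).powersetCard 2 \ (W.erase vk).biUnion (fun v => (N v).powersetCard 2)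
              = (N vk).powersetCard 2 := by
            apply Finset.sdiff_eq_self_of_disjoint
            rw [Finset.disjoint_left]
            intro p hp hmem
            obtain ⟨l, hl, hpl⟩ := Finset.mem_biUnion.mp hmem
            rw [Finset.mem_powersetCard] at hp hpl
            have hsub : p ⊆ (N vk) ∩ (N l) := Finset.subset_inter hp.1 hpl.1
            have := Finset.card_le_card hsub
            have := hbig l hl
            omega
          rw [heq, Finset.card_powersetCard]
          have := arith1 _ hd3
          omega
      have hWcard : (W.erase vk).card ≤ k := by
        have := Finset.card_erase_of_mem hvk
        omega
      have hih := ih (W.erase vk) hWcard (fun v hv => hdeg v (Finset.mem_of_mem_erase hv))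
      have hsum : ∑ v ∈ W, ((N v).card - 2) =
          ((N vk).card - 2) + ∑ v ∈ W.erase vk, ((N v).card - 2) :=
        (Finset.add_sum_erase W _ hvk).symm
      have hcard3 : ((N vk).powersetCard 2 ∪ (W.erase vk).biUnion (fun v => (N v).powersetCard 2)).card =
          ((N vk).powersetCard 2 \ (W.erase vk).biUnion (fun v => (N v).powersetCard 2)).card +
          ((W.erase vk).biUnion (fun v => (N v).powersetCard 2)).card :=
        (Finset.card_sdiff_add_card _ _).symm
      rw [hsum, hbU, hcard3]
      omega
open Finset

theorem c6free_bipartite_bound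
    {U V : Type*} [Fintype U] [Fintype V] (m n : ℕ)
    (hm : 0 < m) (hmn : m ≤ n)
    (hU : Fintype.card U = m) (hV : Fintype.card V = n)
    (E : Finset (U × V))
    (hC6 : ¬ ∃ (u₁ u₂ u₃ : U) (v₁ v₂ v₃ : V),
      u₁ ≠ u₂ ∧ u₁ ≠ u₃ ∧ u₂ ≠ u₃ ∧ v₁ ≠ v₂ ∧ v₁ ≠ v₃ ∧ v₂ ≠ v₃ ∧
      (u₁, v₁) ∈ E ∧ (u₂, v₁) ∈ E ∧ (u₂, v₂) ∈ E ∧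
      (u₃, v₂) ∈ E ∧ (u₃, v₃) ∈ E ∧ (u₁, v₃) ∈ E) :
    (E.card : ℝ) ≤ (m : ℝ) ^ 2 / 2 + 2 * (n : ℝ) := by
  classical
  set N : V → Finset U := fun v => univ.filter (fun u => (u, v) ∈ E) with hN
  have hmem : ∀ u v, u ∈ N v ↔ (u, v) ∈ E := by
    intro u v; simp [hN]
  have hrain : ∀ v₁ v₂ v₃ : V, v₁ ≠ v₂ → v₁ ≠ v₃ → v₂ ≠ v₃ → ∀ a b c : U,
      a ≠ b → a ≠ c → b ≠ c → a ∈ N v₁ → b ∈ N v₁ → b ∈ N v₂ → c ∈ N v₂ →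
      c ∈ N v₃ → a ∈ N v₃ → False := by
    intro v₁ v₂ v₃ h12 h13 h23 a b c hab hac hbc h1 h2 h3 h4 h5 h6
    exact hC6 ⟨a, b, c, v₁, v₂, v₃, hab, hac, hbc, h12, h13, h23,
      (hmem a v₁).mp h1, (hmem b v₁).mp h2, (hmem b v₂).mp h3,
      (hmem c v₂).mp h4, (hmem c v₃).mp h5, (hmem a v₃).mp h6⟩
  -- edge count by fibers
  have hcardE : E.card = ∑ v : V, (N v).card := by
    rw [Finset.card_eq_sum_card_fiberwise (f := Prod.snd) (t := univ) (fun x _ => mem_univ _)]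
    refine Finset.sum_congr rfl fun v _ => ?_
    refine Finset.card_bij (fun e _ => e.1) ?_ ?_ ?_
    · intro e he
      rw [Finset.mem_filter] at he
      rw [hmem]
      have : (e.1, v) = e := by
        ext <;> simp [he.2]
      rw [this]; exact he.1
    · intro e he e' he' h
      rw [Finset.mem_filter] at he he'
      exact Prod.ext h (he.2.trans he'.2.symm)
    · intro u hu
      exact ⟨(u, v), Finset.mem_filter.mpr ⟨(hmem u v).mp hu, rfl⟩, rfl⟩
  -- split by high/low degree
  have hkey : ∑ v ∈ univ.filter (fun v => 3 ≤ (N v).card), ((N v).card - 2) ≤ m.choose 2 := by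
    calc ∑ v ∈ univ.filter (fun v => 3 ≤ (N v).card), ((N v).card - 2)
        ≤ ((univ.filter (fun v => 3 ≤ (N v).card)).biUnion fun v => (N v).powersetCard 2).card :=
          c6_core N hrain _ _ le_rfl (fun v hv => (Finset.mem_filter.mp hv).2)
      _ ≤ ((univ : Finset U).powersetCard 2).card := by
          apply Finset.card_le_card
          intro p hp
          obtain ⟨l, _, hpl⟩ := Finset.mem_biUnion.mp hp
          rw [Finset.mem_powersetCard] at hpl ⊢
          exact ⟨Finset.subset_univ p, hpl.2⟩
      _ = m.choose 2 := by rw [Finset.card_powersetCard, Finset.card_univ, hU]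
  have hsplit : ∑ v : V, (N v).card ≤
      (∑ v ∈ univ.filter (fun v => 3 ≤ (N v).card), ((N v).card - 2)) + 2 * n := by
    have h1 : ∀ v : V, (N v).card ≤
        (if 3 ≤ (N v).card then (N v).card - 2 else 0) + 2 := by
      intro v; split <;> omega
    calc ∑ v : V, (N v).card
        ≤ ∑ v : V, ((if 3 ≤ (N v).card then (N v).card - 2 else 0) + 2) :=
          Finset.sum_le_sum (fun v _ => h1 v)
      _ = (∑ v : V, if 3 ≤ (N v).card then (N v).card - 2 else 0) + 2 * n := by
          rw [Finset.sum_add_distrib, Finset.sum_const, Finset.card_univ, hV, smul_eq_mul]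
          ring
      _ = (∑ v ∈ univ.filter (fun v => 3 ≤ (N v).card), ((N v).card - 2)) + 2 * n := by
          rw [Finset.sum_filter]
  have hnat : E.card ≤ m.choose 2 + 2 * n := by
    rw [hcardE]; omega
  -- conversion to reals
  have hch : 2 * m.choose 2 ≤ m * m := by
    rw [Nat.choose_two_right, mul_comm]
    calc m * (m - 1) / 2 * 2 ≤ m * (m - 1) := Nat.div_mul_le_self _ _
      _ ≤ m * m := Nat.mul_le_mul_left m (by omega)
  have hcast : (E.card : ℝ) ≤ (m.choose 2 : ℝ) + 2 * (n : ℝ) := by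
    have := hnat
    exact_mod_cast Nat.cast_le.mpr this |>.trans_eq (by push_cast; ring)
  have hch' : (m.choose 2 : ℝ) ≤ (m : ℝ) ^ 2 / 2 := by
    have : (2 : ℝ) * (m.choose 2 : ℝ) ≤ (m : ℝ) * (m : ℝ) := by exact_mod_cast hch
    nlinarith
  nlinarith [hcast, hch']
end

section
/- Let n, q be non-negative integers, and let R ≥ 1 and β ∈ [0,1] be reals satisfying R ≥ e^{−βq}·n. Suppose G is a graph on n vertices such that every vertex subset U with |U| ≥ R satisfies e(G[U]) ≥ β·C(|U|, 2). Then for every integer s ≥ q, the number of independent sets of G of size s is at most C(n, q)·C(⌊R⌋, s − q), where C(·,·) denotes the binomial coefficient. -/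
/-!
An independent set `I` inside an available set `A` either avoids a chosen vertex `v`, or contains
`v` and then avoids all neighbours of `v`. Averaging degrees, the density hypothesis gives a vertex
of degree at least `β (|A| - 1)` in `G[A]` whenever `|A| ≥ R`; branching on such a vertex, every
vertex put into `I` shrinks `A` by a factor `1 - β ≤ e^{-β}`, so once `q` vertices of `I` are fixed
at most `R` vertices remain available. Pascal's rule `C(a-1, q) + C(a-1, q-1) = C(a, q)` adds up the
two branches (this is the Kleitman–Winston container argument, run as an induction on `A`).
-/

open scoped Classical

/-- `eIn G U`: the number of edges of the induced subgraph `G[U]`. -/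
noncomputable def eIn {n : ℕ} (G : SimpleGraph (Fin n)) (U : Finset (Fin n)) : ℕ :=
  ((U ×ˢ U).filter (fun p => p.1 < p.2 ∧ G.Adj p.1 p.2)).card

open Finset

namespace SimpleGraph

variable {V : Type*} (G : SimpleGraph V)

noncomputable def indepSetsOfCard (A : Finset V) (s : ℕ) : Finset (Finset V) :=
  (A.powersetCard s).filter (fun I => ∀ a ∈ I, ∀ b ∈ I, ¬ G.Adj a b)

lemma indepSetsOfCard_succ_subset {A : Finset V} {v : V} (s : ℕ) :
    G.indepSetsOfCard A (s + 1) ⊆ G.indepSetsOfCard (A.erase v) (s + 1) ∪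
      (G.indepSetsOfCard ((A.erase v).filter (¬ G.Adj v ·)) s).image (insert v) := by
  intro I hI
  simp only [indepSetsOfCard, mem_filter, mem_powersetCard] at hI
  obtain ⟨⟨hIA, hIs⟩, hind⟩ := hI
  by_cases hvI : v ∈ I
  · refine mem_union_right _ (mem_image.2 ⟨I.erase v, ?_, insert_erase hvI⟩)
    simp only [indepSetsOfCard, mem_filter, mem_powersetCard]
    refine ⟨⟨fun w hw => ?_, by rw [card_erase_of_mem hvI, hIs]; rfl⟩,
      fun a ha b hb => hind a (mem_of_mem_erase ha) b (mem_of_mem_erase hb)⟩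
    exact mem_filter.2 ⟨erase_subset_erase v hIA hw, hind v hvI w (mem_of_mem_erase hw)⟩
  · refine mem_union_left _ ?_
    simp only [indepSetsOfCard, mem_filter, mem_powersetCard]
    exact ⟨⟨fun w hw => mem_erase.2 ⟨ne_of_mem_of_not_mem hw hvI, hIA hw⟩, hIs⟩, hind⟩

lemma card_erase_filter_not_adj_add {A : Finset V} {v : V} (hv : v ∈ A) :
    #((A.erase v).filter (¬ G.Adj v ·)) + #(A.filter (G.Adj v)) + 1 = #A := by
  have hnbrs : (A.erase v).filter (G.Adj v) = A.filter (G.Adj v) := by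
    rw [filter_erase]
    exact erase_eq_of_notMem (by simp)
  rw [add_comm _ #(A.filter _), ← hnbrs, card_filter_add_card_filter_not,
    card_erase_add_one hv]

lemma exp_mul_card_erase_filter_not_adj_le {R β : ℝ} (hβ : 0 ≤ β) (q : ℕ) {A : Finset V}
    {v : V} (hv : v ∈ A) (hvdeg : R ≤ #A → β * (#A - 1) ≤ #(A.filter (G.Adj v)))
    (hA : Real.exp (-(β * (q + 1 : ℕ))) * #A ≤ R) :
    Real.exp (-(β * q)) * #((A.erase v).filter (¬ G.Adj v ·)) ≤ R := by
  have hcard : (#((A.erase v).filter (¬ G.Adj v ·)) : ℝ) = #A - 1 - #(A.filter (G.Adj v)) := by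
    rw [← G.card_erase_filter_not_adj_add hv]; push_cast; ring
  have hexp_le_one : Real.exp (-(β * q)) ≤ 1 :=
    Real.exp_le_one_iff.2 (neg_nonpos.2 (mul_nonneg hβ q.cast_nonneg))
  have hA1 : (1 : ℝ) ≤ #A := by exact_mod_cast card_pos.2 ⟨v, hv⟩
  by_cases hRA : R ≤ #A
  · have hshrink : (#A - 1 - #(A.filter (G.Adj v)) : ℝ) ≤ Real.exp (-β) * #A := by
      have := Real.add_one_le_exp (-β)
      nlinarith [hvdeg hRA, Real.exp_pos (-β)]
    calc Real.exp (-(β * q)) * #((A.erase v).filter (¬ G.Adj v ·))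
        ≤ Real.exp (-(β * q)) * (Real.exp (-β) * #A) := by
          rw [hcard]; exact mul_le_mul_of_nonneg_left hshrink (Real.exp_pos _).le
      _ = Real.exp (-(β * (q + 1 : ℕ))) * #A := by
          rw [← mul_assoc, ← Real.exp_add]; push_cast; ring_nf
      _ ≤ R := hA
  · calc Real.exp (-(β * q)) * #((A.erase v).filter (¬ G.Adj v ·))
        ≤ #((A.erase v).filter (¬ G.Adj v ·)) :=
          mul_le_of_le_one_left (Nat.cast_nonneg _) hexp_le_one
      _ ≤ R := by rw [hcard]; linarith [Nat.cast_nonneg (α := ℝ) #(A.filter (G.Adj v))]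

theorem card_indepSetsOfCard_le {R β : ℝ} (hβ : 0 ≤ β)
    (hdeg : ∀ U : Finset V, U.Nonempty → R ≤ #U →
      ∃ v ∈ U, β * (#U - 1) ≤ #(U.filter (G.Adj v)))
    (A : Finset V) (q s : ℕ) (hqs : q ≤ s) (hA : Real.exp (-(β * q)) * #A ≤ R) :
    #(G.indepSetsOfCard A s) ≤ (#A).choose q * ⌊R⌋₊.choose (s - q) := by
  induction A using Finset.strongInduction generalizing q s with
  | H A ih =>
    rcases q with _ | q
    · have hAR : (#A : ℝ) ≤ R := by simpa using hA
      calc #(G.indepSetsOfCard A s) ≤ #(A.powersetCard s) := card_filter_le _ _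
        _ = (#A).choose s := card_powersetCard _ _
        _ ≤ ⌊R⌋₊.choose s := Nat.choose_le_choose _ (Nat.le_floor hAR)
        _ = (#A).choose 0 * ⌊R⌋₊.choose (s - 0) := by simp
    obtain ⟨s, rfl⟩ : ∃ s', s = s' + 1 := ⟨s - 1, by omega⟩
    rcases A.eq_empty_or_nonempty with rfl | hne
    · simp [indepSetsOfCard]
    obtain ⟨v, hv, hvdeg⟩ : ∃ v ∈ A, R ≤ #A → β * (#A - 1) ≤ #(A.filter (G.Adj v)) := by
      by_cases hRA : R ≤ #A
      · obtain ⟨v, hv, hd⟩ := hdeg A hne hRA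
        exact ⟨v, hv, fun _ => hd⟩
      · exact ⟨hne.choose, hne.choose_spec, fun h => absurd h hRA⟩
    have hdiscard := ih (A.erase v) (erase_ssubset hv) (q + 1) (s + 1) hqs <| by
      refine le_trans (mul_le_mul_of_nonneg_left ?_ (Real.exp_pos _).le) hA
      exact_mod_cast card_erase_le
    have hkeep := ih _ ((filter_subset _ _).trans_ssubset (erase_ssubset hv)) q s (by omega)
      (G.exp_mul_card_erase_filter_not_adj_le hβ q hv hvdeg hA)
    have hcard_keep : #((A.erase v).filter (¬ G.Adj v ·)) ≤ #(A.erase v) := card_filter_le _ _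
    calc #(G.indepSetsOfCard A (s + 1))
        ≤ #(G.indepSetsOfCard (A.erase v) (s + 1)) +
            #(G.indepSetsOfCard ((A.erase v).filter (¬ G.Adj v ·)) s) :=
          (card_le_card (G.indepSetsOfCard_succ_subset s)).trans
            ((card_union_le _ _).trans (add_le_add_right card_image_le _))
      _ ≤ (#(A.erase v)).choose (q + 1) * ⌊R⌋₊.choose (s - q) +
            (#(A.erase v)).choose q * ⌊R⌋₊.choose (s - q) := by
          gcongr
          · simpa using hdiscard
          · exact hkeep.trans (Nat.mul_le_mul_right _ (Nat.choose_le_choose _ hcard_keep))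
      _ = (#A).choose (q + 1) * ⌊R⌋₊.choose (s + 1 - (q + 1)) := by
          rw [← card_erase_add_one hv, Nat.choose_succ_succ', Nat.add_sub_add_right]; ring

end SimpleGraph

section Fin

variable {n : ℕ} (G : SimpleGraph (Fin n))

lemma two_mul_eIn (U : Finset (Fin n)) : 2 * eIn G U = ∑ v ∈ U, #(U.filter (G.Adj v)) := by
  set P := (U ×ˢ U).filter (fun p => G.Adj p.1 p.2)
  have hP : #P = ∑ v ∈ U, #(U.filter (G.Adj v)) := by
    simp only [P, card_filter, sum_product]
  have hlt : P.filter (fun p => p.1 < p.2) =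
      (U ×ˢ U).filter (fun p => p.1 < p.2 ∧ G.Adj p.1 p.2) := by
    simp only [P, filter_filter, and_comm]
  have hswap : #(P.filter (fun p => ¬ p.1 < p.2)) = #(P.filter (fun p => p.1 < p.2)) := by
    refine card_nbij' Prod.swap Prod.swap ?_ ?_ (fun _ _ => rfl) (fun _ _ => rfl)
    · intro p hp
      simp only [P, mem_coe, mem_filter, mem_product] at hp ⊢
      exact ⟨⟨⟨hp.1.1.2, hp.1.1.1⟩, hp.1.2.symm⟩,
        lt_of_le_of_ne (not_lt.1 hp.2) (G.ne_of_adj hp.1.2).symm⟩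
    · intro p hp
      simp only [P, mem_coe, mem_filter, mem_product] at hp ⊢
      exact ⟨⟨⟨hp.1.1.2, hp.1.1.1⟩, hp.1.2.symm⟩, not_lt.2 hp.2.le⟩
  rw [← hP, ← card_filter_add_card_filter_not (fun p : Fin n × Fin n => p.1 < p.2), hswap, hlt,
    eIn, two_mul]

lemma exists_le_card_filter_adj_of_le_eIn {β : ℝ} {U : Finset (Fin n)} (hU : U.Nonempty)
    (hdense : β * ((#U).choose 2 : ℝ) ≤ eIn G U) :
    ∃ v ∈ U, β * (#U - 1) ≤ #(U.filter (G.Adj v)) := by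
  refine exists_le_of_sum_le hU ?_
  calc ∑ _ ∈ U, β * (#U - 1 : ℝ) = 2 * (β * ((#U).choose 2 : ℝ)) := by
        rw [sum_const, nsmul_eq_mul, Nat.cast_choose_two]; ring
    _ ≤ 2 * (eIn G U : ℝ) := by linarith
    _ = ∑ v ∈ U, (#(U.filter (G.Adj v)) : ℝ) := by exact_mod_cast two_mul_eIn G U

end Fin

theorem graph_container :
    ∀ (n q : ℕ) (R β : ℝ), 1 ≤ R → 0 ≤ β → β ≤ 1 →
      Real.exp (-(β * q)) * n ≤ R →
      ∀ G : SimpleGraph (Fin n),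
        (∀ U : Finset (Fin n), R ≤ (U.card : ℝ) →
          β * (U.card.choose 2 : ℝ) ≤ (eIn G U : ℝ)) →
        ∀ s : ℕ, q ≤ s →
          ((Finset.univ : Finset (Fin n)).powerset.filter
            (fun I => I.card = s ∧ ∀ a ∈ I, ∀ b ∈ I, ¬ G.Adj a b)).card
          ≤ n.choose q * (⌊R⌋₊.choose (s - q)) := by
  intro n q R β _ hβ _ hRn G hG s hqs
  have hdeg (U : Finset (Fin n)) (hU : U.Nonempty) (hRU : R ≤ #U) :
      ∃ v ∈ U, β * (#U - 1) ≤ #(U.filter (G.Adj v)) :=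
    exists_le_card_filter_adj_of_le_eIn G hU (hG U hRU)
  have hindep : (univ.powerset.filter
      (fun I => I.card = s ∧ ∀ a ∈ I, ∀ b ∈ I, ¬ G.Adj a b)) ⊆ G.indepSetsOfCard univ s :=
    fun I hI => by simpa [SimpleGraph.indepSetsOfCard, and_assoc] using hI
  simpa using (card_le_card hindep).trans
    (G.card_indepSetsOfCard_le hβ hdeg univ q s hqs (by simpa using hRn))
end

section
/- For every positive integer n and every a ∈ [n] := {1, …, n}, there exist positive integers u, v with a = uv and v ≤ u such that either u is a prime with u ≥ n^{2/3}, or v ≤ u ≤ n^{2/3}. -/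
private lemma cube_le_real {n u : ℕ} (hn : 0 < n) (h : u ^ 3 ≤ n ^ 2) :
    (u : ℝ) ≤ (n : ℝ) ^ ((2 : ℝ)/3) := by
  have h1 : (u : ℝ) ^ (3 : ℝ) ≤ (n : ℝ) ^ (2 : ℝ) := by
    rw [show (3:ℝ) = ((3:ℕ):ℝ) by norm_num, show (2:ℝ) = ((2:ℕ):ℝ) by norm_num,
      Real.rpow_natCast, Real.rpow_natCast]
    exact_mod_cast h
  calc (u : ℝ) = ((u : ℝ) ^ (3:ℝ)) ^ ((1:ℝ)/3) := by
        rw [← Real.rpow_mul (by positivity)]; norm_num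
    _ ≤ ((n : ℝ) ^ (2:ℝ)) ^ ((1:ℝ)/3) :=
        Real.rpow_le_rpow (by positivity) h1 (by norm_num)
    _ = (n : ℝ) ^ ((2:ℝ)/3) := by
        rw [← Real.rpow_mul (by positivity)]; norm_num

private lemma real_le_cube {n u : ℕ} (hn : 0 < n) (h : n ^ 2 ≤ u ^ 3) :
    (n : ℝ) ^ ((2 : ℝ)/3) ≤ (u : ℝ) := by
  have h1 : (n : ℝ) ^ (2 : ℝ) ≤ (u : ℝ) ^ (3 : ℝ) := by
    rw [show (3:ℝ) = ((3:ℕ):ℝ) by norm_num, show (2:ℝ) = ((2:ℕ):ℝ) by norm_num,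
      Real.rpow_natCast, Real.rpow_natCast]
    exact_mod_cast h
  calc (n : ℝ) ^ ((2:ℝ)/3) = ((n : ℝ) ^ (2:ℝ)) ^ ((1:ℝ)/3) := by
        rw [← Real.rpow_mul (by positivity)]; norm_num
    _ ≤ ((u : ℝ) ^ (3:ℝ)) ^ ((1:ℝ)/3) :=
        Real.rpow_le_rpow (by positivity) h1 (by norm_num)
    _ = (u : ℝ) := by
        rw [← Real.rpow_mul (by positivity)]; norm_num

/-- If `d` is a divisor of `a` with `n < d^3 ≤ n^2` and `a ≤ n`, then the pair
`(max d (a/d), min d (a/d))` works with both cubes `≤ n^2`. -/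
private lemma helper {n a d : ℕ} (hn : 0 < n) (ha : 0 < a) (han : a ≤ n)
    (hd : d ∣ a) (h1 : n < d ^ 3) (h2 : d ^ 3 ≤ n ^ 2) :
    ∃ u v : ℕ, 0 < u ∧ 0 < v ∧ a = u * v ∧ v ≤ u ∧ u ^ 3 ≤ n ^ 2 := by
  obtain ⟨e, he⟩ := hd
  have hd0 : 0 < d := by
    rcases Nat.eq_zero_or_pos d with h | h
    · subst h; simp at he; omega
    · exact h
  have he0 : 0 < e := by
    rcases Nat.eq_zero_or_pos e with h | h
    · subst h; simp at he; omega
    · exact h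
  have hae : a ^ 3 = d ^ 3 * e ^ 3 := by rw [he]; ring
  have han3 : a ^ 3 ≤ n ^ 3 := Nat.pow_le_pow_left han 3
  have he2 : e ^ 3 ≤ n ^ 2 := by nlinarith
  refine ⟨max d e, min d e, ?_, ?_, ?_, ?_, ?_⟩
  · exact lt_max_of_lt_left hd0
  · exact lt_min hd0 he0
  · rcases le_total d e with h | h
    · rw [max_eq_right h, min_eq_left h, mul_comm]; exact he
    · rw [max_eq_left h, min_eq_right h]; exact he
  · exact min_le_max
  · rcases le_total d e with h | h
    · rw [max_eq_right h]; exact he2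
    · rw [max_eq_left h]; exact h2

theorem exists_representation :
    ∀ n : ℕ, 0 < n → ∀ a ∈ Finset.Icc 1 n,
      ∃ u v : ℕ, 0 < u ∧ 0 < v ∧ a = u * v ∧ v ≤ u ∧
        ((Nat.Prime u ∧ (n : ℝ) ^ ((2 : ℝ)/3) ≤ (u : ℝ)) ∨
          (u : ℝ) ≤ (n : ℝ) ^ ((2 : ℝ)/3)) := by
  intro n hn a ha
  rw [Finset.mem_Icc] at ha
  obtain ⟨ha1, han⟩ := ha
  have ha0 : 0 < a := ha1
  by_cases hA : ∃ p, p.Prime ∧ p ∣ a ∧ n ^ 2 < p ^ 3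
  · -- big prime factor: u = p is the prime
    obtain ⟨p, hp, hpa, hpn⟩ := hA
    obtain ⟨e, he⟩ := hpa
    have hp0 : 0 < p := hp.pos
    have he0 : 0 < e := by
      rcases Nat.eq_zero_or_pos e with h | h
      · subst h; simp at he; omega
      · exact h
    have hep : e ≤ p := by
      -- a ≤ n and n^2 < p^3 give a < p^2, hence e = a/p ≤ p
      by_contra hlt
      push_neg at hlt
      have h1 : a ^ 3 ≤ n ^ 3 := Nat.pow_le_pow_left han 3
      have h2 : (p ^ 2) ^ 3 = (p ^ 3) ^ 2 := by ring
      have h3 : n ^ 3 ≤ (n ^ 2) ^ 2 := by nlinarith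
      have h4 : a ^ 3 < (p ^ 2) ^ 3 := by
        calc a ^ 3 ≤ n ^ 3 := h1
          _ ≤ (n ^ 2) ^ 2 := h3
          _ < (p ^ 3) ^ 2 := by exact Nat.pow_lt_pow_left hpn (by norm_num)
          _ = (p ^ 2) ^ 3 := by ring
      have h5 : a < p ^ 2 := by
        by_contra h6
        push_neg at h6
        exact absurd (Nat.pow_le_pow_left h6 3) (by omega)
      -- but a = p * e ≥ p * (p+1) > p^2
      have : p ^ 2 < a := by
        calc p ^ 2 = p * p := sq p
          _ < p * e := by exact mul_lt_mul_of_pos_left hlt hp0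
          _ = a := he.symm
      omega
    exact ⟨p, e, hp0, he0, he, hep, Or.inl ⟨hp, real_le_cube hn (le_of_lt hpn)⟩⟩
  · push_neg at hA
    by_cases hB : ∃ p, p.Prime ∧ p ∣ a ∧ n < p ^ 3
    · obtain ⟨p, hp, hpa, hpn⟩ := hB
      obtain ⟨u, v, hu, hv, huv, hvu, hu2⟩ :=
        helper hn ha0 han hpa hpn (hA p hp hpa)
      exact ⟨u, v, hu, hv, huv, hvu, Or.inr (cube_le_real hn hu2)⟩
    · push_neg at hB
      -- all prime factors p of a satisfy p^3 ≤ n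
      set S := (Nat.divisors a).filter (fun d => d ^ 3 ≤ n ^ 2) with hS
      have hne : S.Nonempty := by
        refine ⟨1, ?_⟩
        rw [hS, Finset.mem_filter, Nat.mem_divisors]
        exact ⟨⟨one_dvd a, ha0.ne'⟩, by nlinarith⟩
      set d := S.max' hne with hdd
      have hdS : d ∈ S := S.max'_mem hne
      rw [hS, Finset.mem_filter, Nat.mem_divisors] at hdS
      obtain ⟨⟨hda, _⟩, hd2⟩ := hdS
      have hd0 : 0 < d := Nat.pos_of_dvd_of_pos hda ha0
      by_cases hda' : d = a
      · -- a itself satisfies a^3 ≤ n^2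
        refine ⟨a, 1, ha0, one_pos, (mul_one a).symm, ha1, Or.inr ?_⟩
        exact cube_le_real hn (hda' ▸ hd2)
      · -- d < a; pick a prime of a/d, maximality gives n < d^3
        obtain ⟨e, he⟩ := hda
        have he1 : 1 < e := by
          rcases Nat.eq_zero_or_pos e with h | h
          · subst h; simp at he; omega
          · rcases Nat.lt_or_ge e 2 with h' | h'
            · interval_cases e
              · simp at he; exact absurd he.symm hda'
            · exact h'
        have hp : (e.minFac).Prime := Nat.minFac_prime (by omega)
        have hpe : e.minFac ∣ e := Nat.minFac_dvd e
        have hpa : e.minFac ∣ a := he ▸ hpe.mul_left d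
        have hdpa : d * e.minFac ∣ a := he ▸ mul_dvd_mul_left d hpe
        have hp3 : e.minFac ^ 3 ≤ n := hB _ hp hpa
        have hmax : ¬ (d * e.minFac) ^ 3 ≤ n ^ 2 := by
          intro hcon
          have hmem : d * e.minFac ∈ S := by
            rw [hS, Finset.mem_filter, Nat.mem_divisors]
            exact ⟨⟨hdpa, ha0.ne'⟩, hcon⟩
          have hle := S.le_max' _ hmem
          rw [← hdd] at hle
          have : d < d * e.minFac := by
            have := hp.two_le
            calc d = d * 1 := (mul_one d).symm
              _ < d * e.minFac := by exact mul_lt_mul_of_pos_left (by omega) hd0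
          omega
        push_neg at hmax
        have hd3 : n < d ^ 3 := by
          have h1 : n ^ 2 < d ^ 3 * e.minFac ^ 3 := by
            calc n ^ 2 < (d * e.minFac) ^ 3 := hmax
              _ = d ^ 3 * e.minFac ^ 3 := by ring
          nlinarith [mul_le_mul_right hp3 (d ^ 3)]
        obtain ⟨u, v, hu, hv, huv, hvu, hu2⟩ := helper hn ha0 han ⟨e, he⟩ hd3 hd2
        exact ⟨u, v, hu, hv, huv, hvu, Or.inr (cube_le_real hn hu2)⟩
end

section
/- There exists a constant c > 0 such that for every positive integer n and every finite set {p₁, …, p_k} of primes with each pᵢ ≤ n, the number of positive integers m ≤ n not divisible by any of p₁, …, p_k is at most c·n·∏_{i=1}^{k}(1 − 1/pᵢ). -/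
/-!
Write `S` for the integers in `[1, n]` free of the primes in `P`. Since `S` is closed under taking
divisors, `∑_{m ∈ S} log m = ∑_{m ∈ S} ∑_{d ∣ m} Λ(d) ≤ ∑_{k ∈ S} ψ(n / k) ≪ n ∑_{k ∈ S} 1 / k`, and
`log n ≤ log m + n / m` turns this into `#S · log n ≪ n ∑_{m ∈ S} 1 / m`.

The harmonic sum over `S` is bounded by Rankin's trick with `s = 1 + 1 / log n`: for `m ≤ n` we
have `1 / m ≤ e · m ^ (-s)`, and every `m ∈ S` factors over the primes `p ≤ n` outside `P`, so the
Euler product gives `∑_{m ∈ S} m ^ (-s) ≤ ∏_{p ≤ n} (1 - p ^ (-s))⁻¹ · ∏_{p ∈ P} (1 - p ^ (-s))`.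
The first product is at most `ζ(s) ≤ 1 + log n`. In the second, `1 - p ^ (-s)` is at most
`(1 - 1 / p) · exp (2 log p / (p log n))`, and these exponents add up to `O(1)` by Mertens' estimate
`∑_{p ≤ n} log p / p ≤ log n + O(1)`.
-/

open scoped Classical

open Finset Real Chebyshev
open ArithmeticFunction hiding log

lemma sum_log_eq_sum_vonMangoldt_mul_div (N : ℕ) :
    ∑ m ∈ Ioc 0 N, log m = ∑ d ∈ Ioc 0 N, Λ d * (N / d : ℕ) := by
  rw [← sum_Ioc_mul_zeta_eq_sum, vonMangoldt_mul_zeta]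
  simp [ArithmeticFunction.log_apply]

theorem sum_vonMangoldt_div_le {N : ℕ} (hN : 0 < N) :
    ∑ d ∈ Ioc 0 N, Λ d / d ≤ log N + (log 4 + 4) := by
  have hN' : (0 : ℝ) < N := by exact_mod_cast hN
  have hdiv (d : ℕ) : (N : ℝ) / d ≤ (N / d : ℕ) + 1 := by
    rw [← Nat.floor_div_eq_div (K := ℝ)]
    exact (Nat.lt_floor_add_one _).le
  have hlog : ∑ m ∈ Ioc 0 N, log m ≤ N * log N := by
    calc ∑ m ∈ Ioc 0 N, log m ≤ ∑ _m ∈ Ioc 0 N, log N :=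
          sum_le_sum fun m hm ↦ by
            have := mem_Ioc.mp hm
            exact log_le_log (by exact_mod_cast this.1) (by exact_mod_cast this.2)
      _ = N * log N := by simp
  have hpsi : ∑ d ∈ Ioc 0 N, Λ d ≤ (log 4 + 4) * N := by
    simpa [psi] using psi_le_const_mul_self hN'.le
  rw [← mul_le_mul_iff_right₀ hN', mul_sum]
  calc ∑ d ∈ Ioc 0 N, N * (Λ d / d) = ∑ d ∈ Ioc 0 N, Λ d * (N / d) := by
        congr! 1 with d; ring
    _ ≤ ∑ d ∈ Ioc 0 N, Λ d * ((N / d : ℕ) + 1) :=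
        sum_le_sum fun d _ ↦ mul_le_mul_of_nonneg_left (hdiv d) vonMangoldt_nonneg
    _ = ∑ m ∈ Ioc 0 N, log m + ∑ d ∈ Ioc 0 N, Λ d := by
        rw [sum_log_eq_sum_vonMangoldt_mul_div, ← sum_add_distrib]
        congr! 1 with d; ring
    _ ≤ N * (log N + (log 4 + 4)) := by nlinarith

theorem sum_log_div_le_of_subset_primesLE {n : ℕ} (hn : 0 < n) {P : Finset ℕ}
    (hP : P ⊆ Nat.primesLE n) :
    ∑ p ∈ P, log p / p ≤ log n + (log 4 + 4) := by
  have hprime (p) (hp : p ∈ P) : p.Prime := Nat.prime_of_mem_primesLE (hP hp)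
  calc ∑ p ∈ P, log p / p = ∑ p ∈ P, Λ p / p :=
        sum_congr rfl fun p hp ↦ by rw [vonMangoldt_apply_prime (hprime p hp)]
    _ ≤ ∑ d ∈ Ioc 0 n, Λ d / d :=
        sum_le_sum_of_subset_of_nonneg
          (fun p hp ↦ mem_Ioc.mpr ⟨(hprime p hp).pos, Nat.le_of_mem_primesLE (hP hp)⟩)
          (fun _ _ _ ↦ div_nonneg vonMangoldt_nonneg (Nat.cast_nonneg _))
    _ ≤ log n + (log 4 + 4) := sum_vonMangoldt_div_le hn

lemma sum_log_le_sum_psi {n : ℕ} {S : Finset ℕ} (hS : S ⊆ Icc 1 n)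
    (hdvd : ∀ m ∈ S, ∀ k, k ∣ m → k ∈ S) :
    ∑ m ∈ S, log m ≤ ∑ k ∈ S, ψ (n / k : ℕ) := by
  have h0 : 0 ∉ S := fun h ↦ by simpa using hS h
  obtain ⟨χ, hχ⟩ : ∃ χ : ArithmeticFunction ℝ, ∀ m, χ m = if m ∈ S then 1 else 0 :=
    ⟨⟨fun m ↦ if m ∈ S then 1 else 0, by simp [h0]⟩, fun _ ↦ rfl⟩
  have hsum (f : ℕ → ℝ) : ∑ m ∈ Ioc 0 n, χ m * f m = ∑ m ∈ S, f m := by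
    simp only [hχ, ite_mul, one_mul, zero_mul, sum_ite_mem]
    rw [inter_eq_right.mpr fun m hm ↦ ?_]
    have := mem_Icc.mp (hS hm)
    exact mem_Ioc.mpr ⟨this.1, this.2⟩
  -- on `S`, `log m = ∑_{d ∣ m} Λ d` and every cofactor `m / d` lies in `S` again
  have hpoint (m : ℕ) : χ m * log m ≤ (χ * Λ) m := by
    rw [mul_comm χ, mul_apply, Nat.sum_divisorsAntidiagonal (fun a b ↦ Λ a * χ b)]
    by_cases hm : m ∈ S
    · rw [hχ, if_pos hm, one_mul, ← vonMangoldt_sum]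
      refine (sum_congr rfl fun d hd ↦ ?_).le
      rw [hχ, if_pos (hdvd m hm _ (Nat.div_dvd_of_dvd (Nat.dvd_of_mem_divisors hd))), mul_one]
    · rw [hχ, if_neg hm, zero_mul]
      exact sum_nonneg fun d _ ↦ mul_nonneg vonMangoldt_nonneg (by rw [hχ]; split_ifs <;> norm_num)
  calc ∑ m ∈ S, log m = ∑ m ∈ Ioc 0 n, χ m * log m := (hsum _).symm
    _ ≤ ∑ m ∈ Ioc 0 n, (χ * Λ) m := sum_le_sum fun m _ ↦ hpoint m
    _ = ∑ k ∈ Ioc 0 n, χ k * ∑ d ∈ Ioc 0 (n / k), Λ d := sum_Ioc_mul_eq_sum_sum χ Λ n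
    _ = ∑ k ∈ S, ψ (n / k : ℕ) := by simp only [hsum, psi, Nat.floor_natCast]

theorem card_mul_log_le {n : ℕ} {S : Finset ℕ} (hS : S ⊆ Icc 1 n)
    (hdvd : ∀ m ∈ S, ∀ k, k ∣ m → k ∈ S) :
    #S * log n ≤ (log 4 + 5) * n * ∑ m ∈ S, (m : ℝ)⁻¹ := by
  have hpos (m) (hm : m ∈ S) : (0 : ℝ) < m := by
    have := (mem_Icc.mp (hS hm)).1; positivity
  have hlog (m) (hm : m ∈ S) : log n ≤ log m + n * (m : ℝ)⁻¹ := by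
    have hmn : (m : ℝ) ≤ n := by exact_mod_cast (mem_Icc.mp (hS hm)).2
    have := log_le_sub_one_of_pos (div_pos ((hpos m hm).trans_le hmn) (hpos m hm))
    rw [log_div ((hpos m hm).trans_le hmn).ne' (hpos m hm).ne'] at this
    rw [← div_eq_mul_inv]; linarith
  have hpsi (k) (hk : k ∈ S) : ψ (n / k : ℕ) ≤ (log 4 + 4) * (n * (k : ℝ)⁻¹) :=
    (psi_le_const_mul_self (by positivity)).trans <|
      mul_le_mul_of_nonneg_left (by rw [← div_eq_mul_inv]; exact Nat.cast_div_le) (by positivity)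
  calc #S * log n = ∑ m ∈ S, log n := by simp
    _ ≤ ∑ m ∈ S, log m + n * ∑ m ∈ S, (m : ℝ)⁻¹ := by
        rw [mul_sum, ← sum_add_distrib]; exact sum_le_sum hlog
    _ ≤ (log 4 + 4) * n * ∑ m ∈ S, (m : ℝ)⁻¹ + n * ∑ m ∈ S, (m : ℝ)⁻¹ := by
        gcongr
        refine (sum_log_le_sum_psi hS hdvd).trans ((sum_le_sum hpsi).trans_eq ?_)
        simp only [mul_sum, mul_assoc]
    _ = (log 4 + 5) * n * ∑ m ∈ S, (m : ℝ)⁻¹ := by ring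

lemma one_sub_rpow_neg_pos {p : ℕ} (hp : p.Prime) {s : ℝ} (hs : 0 < s) :
    0 < 1 - (p : ℝ) ^ (-s) :=
  sub_pos.mpr (rpow_lt_one_of_one_lt_of_neg (by exact_mod_cast hp.one_lt) (neg_neg_of_pos hs))

lemma prod_one_sub_inv_nonneg {P : Finset ℕ} (hP : ∀ p ∈ P, 0 < p) :
    0 ≤ ∏ p ∈ P, (1 - (p : ℝ)⁻¹) :=
  prod_nonneg fun p hp ↦ sub_nonneg.mpr (inv_le_one_of_one_le₀ (by exact_mod_cast hP p hp))

noncomputable def rpowNegHom (s : ℝ) : ℕ →* ℝ where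
  toFun m := (m : ℝ) ^ (-s)
  map_one' := by simp
  map_mul' a b := by push_cast; exact mul_rpow a.cast_nonneg b.cast_nonneg

lemma rpowNegHom_apply (s : ℝ) (m : ℕ) : rpowNegHom s m = (m : ℝ) ^ (-s) := rfl

lemma sum_rpow_neg_le_prod_inv_one_sub {s : ℝ} (hs : 0 < s) {Q S : Finset ℕ}
    (hQ : ∀ p ∈ Q, p.Prime) (hS : ∀ m ∈ S, m ≠ 0 ∧ m.primeFactors ⊆ Q) :
    ∑ m ∈ S, (m : ℝ) ^ (-s) ≤ ∏ p ∈ Q, (1 - (p : ℝ) ^ (-s))⁻¹ := by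
  have hlt {p : ℕ} (hp : p.Prime) : ‖rpowNegHom s p‖ < 1 := by
    rw [rpowNegHom_apply, norm_of_nonneg (by positivity)]
    exact sub_pos.mp (one_sub_rpow_neg_pos hp hs)
  have hsum := (EulerProduct.summable_and_hasSum_factoredNumbers_prod_filter_prime_geometric
    hlt Q).2
  rw [filter_true_of_mem hQ] at hsum
  have hmem : ∀ m ∈ S, m ∈ Nat.factoredNumbers Q := fun m hm ↦
    Nat.mem_factoredNumbers_of_primeFactors_subset (hS m hm).1 (hS m hm).2
  rw [← sum_subtype_of_mem _ hmem]
  exact sum_le_hasSum _ (fun _ _ ↦ by positivity) hsum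

lemma prod_inv_one_sub_rpow_neg_le {s : ℝ} (hs : 1 < s) {Q : Finset ℕ} (hQ : ∀ p ∈ Q, p.Prime) :
    ∏ p ∈ Q, (1 - (p : ℝ) ^ (-s))⁻¹ ≤ 1 + (s - 1)⁻¹ := by
  have hsum : Summable (rpowNegHom s) := summable_nat_rpow.mpr (by linarith)
  -- `ζ(s) - 1 / (s - 1) = 1 - s · termTSum s`, where `termTSum s` is a sum of nonnegative integrals
  have hzeta := ZetaAsymptotics.zeta_limit_aux1 hs
  have hterm : 0 ≤ ZetaAsymptotics.termTSum s :=
    tsum_nonneg fun n ↦ ZetaAsymptotics.term_nonneg (n + 1) s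
  calc ∏ p ∈ Q, (1 - (p : ℝ) ^ (-s))⁻¹ = ∑' m : Nat.factoredNumbers Q, rpowNegHom s m := by
        rw [← EulerProduct.prod_filter_prime_geometric_eq_tsum_factoredNumbers hsum Q,
          filter_true_of_mem hQ]
        rfl
    _ ≤ ∑' m, rpowNegHom s m :=
        hsum.tsum_subtype_le _ _ (fun m ↦ by rw [rpowNegHom_apply]; positivity)
    _ = ∑' m : ℕ, 1 / (m + 1 : ℝ) ^ s := by
        rw [hsum.tsum_eq_zero_add]
        simp only [rpowNegHom_apply, Nat.cast_zero, zero_rpow (by linarith : -s ≠ 0), zero_add,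
          Nat.cast_add_one, one_div]
        exact tsum_congr fun m ↦ rpow_neg (by positivity) s
    _ ≤ 1 + (s - 1)⁻¹ := by
        rw [inv_eq_one_div]; nlinarith

lemma rpow_neg_one_add_eq {x : ℝ} (hx : 0 < x) (δ : ℝ) :
    x ^ (-(1 + δ)) = x⁻¹ * exp (-(δ * log x)) := by
  rw [neg_add, rpow_add hx, rpow_neg_one, rpow_def_of_pos hx]
  ring_nf

lemma inv_le_exp_one_mul_rpow_neg {x L : ℝ} (hx : 1 ≤ x) (hxL : log x ≤ L) (hL : 0 < L) :
    x⁻¹ ≤ exp 1 * x ^ (-(1 + L⁻¹)) := by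
  have hx0 : 0 < x := by linarith
  rw [rpow_neg_one_add_eq hx0, mul_left_comm, ← exp_add]
  refine le_mul_of_one_le_right (by positivity) (one_le_exp ?_)
  have : L⁻¹ * log x ≤ 1 := by
    rw [inv_mul_le_iff₀ hL]; linarith
  linarith

lemma one_sub_rpow_neg_one_add_le {x δ : ℝ} (hx : 2 ≤ x) (hδ : 0 ≤ δ) :
    1 - x ^ (-(1 + δ)) ≤ (1 - x⁻¹) * exp (2 * δ * (log x / x)) := by
  have hx0 : 0 < x := by linarith
  have ht : 0 ≤ δ * (log x / x) := mul_nonneg hδ (div_nonneg (log_nonneg (by linarith)) hx0.le)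
  have hinv : x⁻¹ ≤ 1 / 2 := by rw [inv_eq_one_div]; gcongr
  calc 1 - x ^ (-(1 + δ)) ≤ 1 - x⁻¹ * (1 - δ * log x) := by
        rw [rpow_neg_one_add_eq hx0]
        gcongr
        linarith [add_one_le_exp (-(δ * log x))]
    _ = (1 - x⁻¹) + δ * (log x / x) := by field_simp; ring
    _ ≤ (1 - x⁻¹) * (1 + 2 * δ * (log x / x)) := by nlinarith
    _ ≤ (1 - x⁻¹) * exp (2 * δ * (log x / x)) := by
        gcongr
        · linarith
        · linarith [add_one_le_exp (2 * δ * (log x / x))]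

lemma prod_one_sub_rpow_neg_le {n : ℕ} (hn : 2 ≤ n) {P : Finset ℕ} (hP : P ⊆ Nat.primesLE n) :
    ∏ p ∈ P, (1 - (p : ℝ) ^ (-(1 + (log n)⁻¹)))
      ≤ exp (2 + 2 * (log 4 + 4) / log n) * ∏ p ∈ P, (1 - (p : ℝ)⁻¹) := by
  have hL : 0 < log n := log_pos (by exact_mod_cast hn)
  have hprime (p) (hp : p ∈ P) : p.Prime := Nat.prime_of_mem_primesLE (hP hp)
  calc ∏ p ∈ P, (1 - (p : ℝ) ^ (-(1 + (log n)⁻¹)))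
      ≤ ∏ p ∈ P, ((1 - (p : ℝ)⁻¹) * exp (2 * (log n)⁻¹ * (log p / p))) :=
        prod_le_prod (fun p hp ↦ (one_sub_rpow_neg_pos (hprime p hp) (by positivity)).le)
          fun p hp ↦ one_sub_rpow_neg_one_add_le (by exact_mod_cast (hprime p hp).two_le)
            (inv_pos.mpr hL).le
    _ = exp (2 * (log n)⁻¹ * ∑ p ∈ P, log p / p) * ∏ p ∈ P, (1 - (p : ℝ)⁻¹) := by
        rw [prod_mul_distrib, ← exp_sum, mul_sum, mul_comm]
    _ ≤ exp (2 * (log n)⁻¹ * (log n + (log 4 + 4))) * ∏ p ∈ P, (1 - (p : ℝ)⁻¹) := by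
        gcongr
        · exact prod_one_sub_inv_nonneg fun p hp ↦ (hprime p hp).pos
        · exact sum_log_div_le_of_subset_primesLE (by omega) hP
    _ = exp (2 + 2 * (log 4 + 4) / log n) * ∏ p ∈ P, (1 - (p : ℝ)⁻¹) := by
        congr 2; field_simp

lemma sum_inv_le_mul_prod_one_sub_rpow_neg {n : ℕ} (hn : 2 ≤ n) {P S : Finset ℕ}
    (hP : P ⊆ Nat.primesLE n) (hS : S ⊆ Icc 1 n) (hcop : ∀ m ∈ S, ∀ p ∈ P, ¬ p ∣ m) :
    ∑ m ∈ S, (m : ℝ)⁻¹ ≤ exp 1 * (1 + log n) * ∏ p ∈ P, (1 - (p : ℝ) ^ (-(1 + (log n)⁻¹))) := by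
  have hL : 0 < log n := log_pos (by exact_mod_cast hn)
  set s := 1 + (log n)⁻¹ with hs
  have hpos (p) (hp : p ∈ Nat.primesLE n) : 0 < 1 - (p : ℝ) ^ (-s) :=
    one_sub_rpow_neg_pos (Nat.prime_of_mem_primesLE hp) (by positivity)
  have hfac (m) (hm : m ∈ S) : m ≠ 0 ∧ m.primeFactors ⊆ Nat.primesLE n \ P := by
    have hm' := mem_Icc.mp (hS hm)
    refine ⟨by omega, fun p hp ↦ ?_⟩
    have ⟨hpp, hpm, _⟩ := Nat.mem_primeFactors.mp hp
    exact mem_sdiff.mpr ⟨Nat.mem_primesLE.mpr ⟨(Nat.le_of_dvd (by omega) hpm).trans hm'.2, hpp⟩,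
      fun hpP ↦ hcop m hm p hpP hpm⟩
  have hsplit : ∏ p ∈ Nat.primesLE n \ P, (1 - (p : ℝ) ^ (-s))⁻¹
      = (∏ p ∈ Nat.primesLE n, (1 - (p : ℝ) ^ (-s))⁻¹) * ∏ p ∈ P, (1 - (p : ℝ) ^ (-s)) := by
    rw [← prod_sdiff hP, mul_assoc, ← prod_mul_distrib,
      prod_eq_one fun p hp ↦ inv_mul_cancel₀ (hpos p (hP hp)).ne', mul_one]
  have hzeta : ∏ p ∈ Nat.primesLE n, (1 - (p : ℝ) ^ (-s))⁻¹ ≤ 1 + log n := by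
    have := prod_inv_one_sub_rpow_neg_le (s := s) (by linarith [inv_pos.mpr hL])
      fun p hp ↦ Nat.prime_of_mem_primesLE (n := n) hp
    rwa [hs, add_sub_cancel_left, inv_inv] at this
  calc ∑ m ∈ S, (m : ℝ)⁻¹ ≤ ∑ m ∈ S, exp 1 * (m : ℝ) ^ (-s) := by
        refine sum_le_sum fun m hm ↦ inv_le_exp_one_mul_rpow_neg ?_ ?_ hL
        · exact_mod_cast (mem_Icc.mp (hS hm)).1
        · exact log_le_log (by exact_mod_cast (mem_Icc.mp (hS hm)).1)
            (by exact_mod_cast (mem_Icc.mp (hS hm)).2)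
    _ = exp 1 * ∑ m ∈ S, (m : ℝ) ^ (-s) := (mul_sum ..).symm
    _ ≤ exp 1 * ∏ p ∈ Nat.primesLE n \ P, (1 - (p : ℝ) ^ (-s))⁻¹ := by
        gcongr
        exact sum_rpow_neg_le_prod_inv_one_sub (by positivity)
          (fun p hp ↦ Nat.prime_of_mem_primesLE (mem_sdiff.mp hp).1) hfac
    _ ≤ exp 1 * ((1 + log n) * ∏ p ∈ P, (1 - (p : ℝ) ^ (-s))) := by
        rw [hsplit]
        gcongr
        exact prod_nonneg fun p hp ↦ (hpos p (hP hp)).le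
    _ = _ := by ring

theorem exists_sum_inv_le_mul_log_mul_prod :
    ∃ K : ℝ, ∀ n : ℕ, 2 ≤ n → ∀ P S : Finset ℕ, P ⊆ Nat.primesLE n → S ⊆ Icc 1 n →
      (∀ m ∈ S, ∀ p ∈ P, ¬ p ∣ m) →
        ∑ m ∈ S, (m : ℝ)⁻¹ ≤ K * log n * ∏ p ∈ P, (1 - (p : ℝ)⁻¹) := by
  refine ⟨exp 1 * (1 + (log 2)⁻¹) * exp (2 + 2 * (log 4 + 4) / log 2),
    fun n hn P S hP hS hcop ↦ ?_⟩
  have hlog2 : 0 < log 2 := log_pos one_lt_two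
  have hL : log 2 ≤ log n := log_le_log two_pos (by exact_mod_cast hn)
  have hprime (p) (hp : p ∈ P) : p.Prime := Nat.prime_of_mem_primesLE (hP hp)
  have hlog : 1 + log n ≤ (1 + (log 2)⁻¹) * log n := by
    have : 1 ≤ log n / log 2 := (one_le_div hlog2).mpr hL
    rw [add_mul, one_mul, inv_mul_eq_div]; linarith
  calc ∑ m ∈ S, (m : ℝ)⁻¹
      ≤ exp 1 * (1 + log n) * ∏ p ∈ P, (1 - (p : ℝ) ^ (-(1 + (log n)⁻¹))) :=
        sum_inv_le_mul_prod_one_sub_rpow_neg hn hP hS hcop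
    _ ≤ exp 1 * ((1 + (log 2)⁻¹) * log n)
          * (exp (2 + 2 * (log 4 + 4) / log 2) * ∏ p ∈ P, (1 - (p : ℝ)⁻¹)) := by
        refine mul_le_mul (by gcongr) ((prod_one_sub_rpow_neg_le hn hP).trans ?_)
          (prod_nonneg fun p hp ↦ (one_sub_rpow_neg_pos (hprime p hp) (by positivity)).le)
          (by positivity)
        gcongr
        exact prod_one_sub_inv_nonneg fun p hp ↦ (hprime p hp).pos
    _ = _ := by ring

def sifted (n : ℕ) (P : Finset ℕ) : Finset ℕ :=
  (Finset.Icc 1 n).filter (fun m => ∀ p ∈ P, ¬ p ∣ m)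

lemma sifted_subset (n : ℕ) (P : Finset ℕ) : sifted n P ⊆ Icc 1 n := filter_subset _ _

lemma not_dvd_of_mem_sifted {n m : ℕ} {P : Finset ℕ} (hm : m ∈ sifted n P) :
    ∀ p ∈ P, ¬ p ∣ m :=
  (mem_filter.mp hm).2

lemma mem_sifted_of_dvd {n m k : ℕ} {P : Finset ℕ} (hm : m ∈ sifted n P) (hk : k ∣ m) :
    k ∈ sifted n P := by
  have hm' := mem_Icc.mp (sifted_subset n P hm)
  exact mem_filter.mpr ⟨mem_Icc.mpr ⟨Nat.pos_of_dvd_of_pos hk (by omega),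
    (Nat.le_of_dvd (by omega) hk).trans hm'.2⟩,
    fun p hp hpk ↦ not_dvd_of_mem_sifted hm p hp (hpk.trans hk)⟩

theorem brun_sieve_bound :
    ∃ c : ℝ, 0 < c ∧ ∀ n : ℕ, 0 < n → ∀ P : Finset ℕ,
      (∀ p ∈ P, Nat.Prime p ∧ p ≤ n) →
      (((Finset.Icc 1 n).filter (fun m => ∀ p ∈ P, ¬ p ∣ m)).card : ℝ)
        ≤ c * (n : ℝ) * ∏ p ∈ P, (1 - 1 / (p : ℝ)) := by
  obtain ⟨K, hK⟩ := exists_sum_inv_le_mul_log_mul_prod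
  refine ⟨max 1 ((log 4 + 5) * K), by positivity, fun n hn P hP ↦ ?_⟩
  change (#(sifted n P) : ℝ) ≤ _
  simp only [one_div]
  have hprod := prod_one_sub_inv_nonneg fun p hp ↦ (hP p hp).1.pos
  obtain rfl | hn2 : n = 1 ∨ 2 ≤ n := by omega
  · obtain rfl : P = ∅ := eq_empty_of_forall_notMem fun p hp ↦ by
      have := (hP p hp).1.two_le; have := (hP p hp).2; omega
    have : (#(sifted 1 ∅) : ℝ) ≤ 1 := by
      exact_mod_cast (card_le_card (sifted_subset 1 ∅)).trans (by simp)
    simpa using this.trans (le_max_left _ _)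
  have hlog : 0 < log n := log_pos (by exact_mod_cast hn2)
  have hsum := hK n hn2 P (sifted n P) (fun p hp ↦ Nat.mem_primesLE.mpr ⟨(hP p hp).2, (hP p hp).1⟩)
    (sifted_subset n P) fun m hm ↦ not_dvd_of_mem_sifted hm
  have hcard := (card_mul_log_le (sifted_subset n P) fun m hm k hk ↦ mem_sifted_of_dvd hm hk).trans
    (mul_le_mul_of_nonneg_left hsum (by positivity))
  set E := ∏ p ∈ P, (1 - (p : ℝ)⁻¹)
  refine le_of_mul_le_mul_right (hcard.trans ?_) hlog
  calc (log 4 + 5) * n * (K * log n * E) = (log 4 + 5) * K * (n * E * log n) := by ring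
    _ ≤ max 1 ((log 4 + 5) * K) * (n * E * log n) :=
      mul_le_mul_of_nonneg_right (le_max_right _ _) (by positivity)
    _ = _ := by ring
end

section
/- Let n be a positive integer and let S ⊆ [n] be a multiplicative Sidon set. Then the set A₂ := {a ∈ S : there is a prime p > n^{2/3} with p ∣ a such that p divides at least two elements of S} has size at most n^{2/3}. -/
open scoped Classical

/-- A finite set of naturals is multiplicative Sidon if it contains no four
distinct elements `a₁, a₂, b₁, b₂` with `a₁ * a₂ = b₁ * b₂`. -/
def MulSidon (A : Finset ℕ) : Prop :=
  ¬ ∃ a₁ a₂ b₁ b₂, a₁ ∈ A ∧ a₂ ∈ A ∧ b₁ ∈ A ∧ b₂ ∈ A ∧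
    a₁ ≠ a₂ ∧ a₁ ≠ b₁ ∧ a₁ ≠ b₂ ∧ a₂ ≠ b₁ ∧ a₂ ≠ b₂ ∧ b₁ ≠ b₂ ∧
    a₁ * a₂ = b₁ * b₂

theorem A2_small :
    ∀ n : ℕ, 0 < n → ∀ S : Finset ℕ, S ⊆ Finset.Icc 1 n → MulSidon S →
      (((S.filter (fun a => ∃ p : ℕ, Nat.Prime p ∧ (n : ℝ) ^ ((2 : ℝ)/3) < (p : ℝ) ∧
          p ∣ a ∧ 2 ≤ (S.filter (fun b => p ∣ b)).card)).card : ℝ))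
        ≤ (n : ℝ) ^ ((2 : ℝ)/3) := by
  intro n hn S hS hSidon
  have hn1 : (1:ℝ) ≤ (n:ℝ) := by exact_mod_cast hn
  have hnpos : (0:ℝ) < (n:ℝ) := by linarith
  set α : ℝ := (n:ℝ) ^ ((2:ℝ)/3) with hαdef
  set β : ℝ := (n:ℝ) ^ ((1:ℝ)/3) with hβdef
  have hα1 : (1:ℝ) ≤ α := Real.one_le_rpow hn1 (by norm_num)
  have hβ1 : (1:ℝ) ≤ β := Real.one_le_rpow hn1 (by norm_num)
  have hβα : β ≤ α := Real.rpow_le_rpow_of_exponent_le hn1 (by norm_num)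
  have hαβ : α * β = n := by
    rw [hαdef, hβdef, ← Real.rpow_add hnpos]
    norm_num
  have hββ : β * β = α := by
    rw [hαdef, hβdef, ← Real.rpow_add hnpos]
    norm_num
  set K : ℕ := ⌊β⌋₊ with hKdef
  have hKβ : (K:ℝ) ≤ β := Nat.floor_le (by linarith)
  have hSle : ∀ a ∈ S, 1 ≤ a ∧ a ≤ n := fun a ha => Finset.mem_Icc.mp (hS ha)
  -- small quotient
  have hsmall : ∀ a ∈ S, ∀ p : ℕ, Nat.Prime p → α < p → p ∣ a →
      1 ≤ a / p ∧ a / p ≤ K := by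
    intro a ha p hp hpα hpa
    obtain ⟨ha1, han⟩ := hSle a ha
    have hppos : 0 < p := hp.pos
    have hmul : p * (a / p) = a := Nat.mul_div_cancel' hpa
    have hm1 : 1 ≤ a / p := (Nat.one_le_div_iff hppos).mpr (Nat.le_of_dvd (by omega) hpa)
    refine ⟨hm1, Nat.le_floor ?_⟩
    have hreal : (p:ℝ) * ((a/p : ℕ):ℝ) ≤ (n:ℝ) := by
      have : p * (a/p) ≤ n := by omega
      exact_mod_cast this
    have h2 : ((a/p : ℕ):ℝ) * α ≤ (n:ℝ) := by
      have hmnn : (0:ℝ) ≤ ((a/p : ℕ):ℝ) := Nat.cast_nonneg _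
      nlinarith
    -- (a/p) * α ≤ n = α * β  ⇒ a/p ≤ β
    have hαpos : (0:ℝ) < α := by linarith
    have : ((a/p : ℕ):ℝ) * α ≤ β * α := by rw [mul_comm β α, hαβ]; exact h2
    exact le_of_mul_le_mul_right this hαpos
  have hKlt : ∀ p : ℕ, Nat.Prime p → α < p → K < p := by
    intro p hp hpα
    have : (K:ℝ) < (p:ℝ) := by linarith
    exact_mod_cast this
  have cross : ∀ p q x y : ℕ, Nat.Prime p → Nat.Prime q → α < p → α < q → p ≠ q →
      1 ≤ y → y ≤ K → p * x ≠ q * y := by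
    intro p q x y hp hq hpα hqα hpq hy1 hyK heq
    have hpdvd : p ∣ q * y := ⟨x, heq.symm⟩
    rcases (Nat.Prime.dvd_mul hp).mp hpdvd with h | h
    · exact hpq ((Nat.prime_dvd_prime_iff_eq hp hq).mp h)
    · have h1 : p ≤ y := Nat.le_of_dvd (by omega) h
      have h2 : K < p := hKlt p hp hpα
      omega
  set A₂ := S.filter (fun a => ∃ p : ℕ, Nat.Prime p ∧ α < (p : ℝ) ∧
      p ∣ a ∧ 2 ≤ (S.filter (fun b => p ∣ b)).card) with hA₂def
  have key : ∀ a : ℕ, ∃ p b : ℕ, a ∈ A₂ →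
      Nat.Prime p ∧ α < (p:ℝ) ∧ p ∣ a ∧ b ∈ S ∧ b ≠ a ∧ p ∣ b := by
    intro a
    by_cases ha : a ∈ A₂
    · rw [hA₂def, Finset.mem_filter] at ha
      obtain ⟨haS, p, hp, hpα, hpa, hcard⟩ := ha
      have haT : a ∈ S.filter (fun b => p ∣ b) := Finset.mem_filter.mpr ⟨haS, hpa⟩
      have hne : ((S.filter (fun b => p ∣ b)).erase a).Nonempty := by
        rw [← Finset.card_pos, Finset.card_erase_of_mem haT]; omega
      obtain ⟨b, hb⟩ := hne
      rw [Finset.mem_erase, Finset.mem_filter] at hb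
      exact ⟨p, b, fun _ => ⟨hp, hpα, hpa, hb.2.1, hb.1, hb.2.2⟩⟩
    · exact ⟨2, 0, fun h => absurd h ha⟩
  choose P B hPB using key
  have hA₂S : ∀ a ∈ A₂, a ∈ S := by
    intro a ha; rw [hA₂def, Finset.mem_filter] at ha; exact ha.1
  set f : ℕ → ℕ × ℕ := fun a => (a / P a, B a / P a) with hfdef
  have hmaps : ∀ a ∈ A₂, f a ∈ Finset.Icc 1 K ×ˢ Finset.Icc 1 K := by
    intro a ha
    obtain ⟨hp, hpα, hpa, hbS, hba, hpb⟩ := hPB a ha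
    rw [Finset.mem_product, Finset.mem_Icc, Finset.mem_Icc]
    exact ⟨hsmall a (hA₂S a ha) (P a) hp hpα hpa, hsmall (B a) hbS (P a) hp hpα hpb⟩
  have hinj : Set.InjOn f ↑A₂ := by
    intro a ha' b hb' hfab
    have ha : a ∈ A₂ := ha'
    have hb : b ∈ A₂ := hb'
    by_contra hab
    obtain ⟨hpA, hpAα, hpAa, hBaS, hBane, hpABa⟩ := hPB a ha
    obtain ⟨hpB, hpBα, hpBb, hBbS, hBbne, hpBBb⟩ := hPB b hb
    set x := a / P a with hx
    set y := B a / P a with hy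
    have h1 : x = b / P b := congrArg Prod.fst hfab
    have h2 : y = B b / P b := congrArg Prod.snd hfab
    have ea : P a * x = a := Nat.mul_div_cancel' hpAa
    have eb : P b * x = b := by rw [h1]; exact Nat.mul_div_cancel' hpBb
    have ea' : P a * y = B a := Nat.mul_div_cancel' hpABa
    have eb' : P b * y = B b := by rw [h2]; exact Nat.mul_div_cancel' hpBBb
    obtain ⟨hx1, hxK⟩ := hsmall a (hA₂S a ha) (P a) hpA hpAα hpAa
    obtain ⟨hy1, hyK⟩ := hsmall (B a) hBaS (P a) hpA hpAα hpABa
    have hpq : P a ≠ P b := by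
      intro h
      apply hab
      rw [← ea, ← eb, h]
    have hxy : x ≠ y := by
      intro h
      apply hBane
      rw [← ea', ← h]
      exact ea
    -- the four elements a, B b, B a, b violate Sidon
    have hne1 : a ≠ B b := fun h =>
      cross (P a) (P b) x y hpA hpB hpAα hpBα hpq hy1 hyK (by rw [ea, eb']; exact h)
    have hne2 : a ≠ B a := fun h =>
      hxy (Nat.eq_of_mul_eq_mul_left hpA.pos (by rw [ea, ea']; exact h))
    have hne4 : B b ≠ B a := fun h =>
      hpq (Nat.eq_of_mul_eq_mul_right hy1 (by rw [eb', ea']; exact h)).symm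
    have hne5 : B b ≠ b := fun h =>
      hxy (Nat.eq_of_mul_eq_mul_left hpB.pos (by rw [eb', eb]; exact h)).symm
    have hne6 : B a ≠ b := fun h =>
      cross (P a) (P b) y x hpA hpB hpAα hpBα hpq hx1 hxK (by rw [ea', eb]; exact h)
    have hprod : a * B b = B a * b := by
      have h : (P a * x) * (P b * y) = (P a * y) * (P b * x) := by ring
      rw [ea, eb', ea', eb] at h
      exact h
    exact hSidon ⟨a, B b, B a, b, hA₂S a ha, hBbS, hBaS, hA₂S b hb,
      hne1, hne2, hab, hne4, hne5, hne6, hprod⟩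
  have hcard : A₂.card ≤ (Finset.Icc 1 K ×ˢ Finset.Icc 1 K).card :=
    Finset.card_le_card_of_injOn f hmaps hinj
  have hprod : (Finset.Icc 1 K ×ˢ Finset.Icc 1 K).card = K * K := by
    rw [Finset.card_product, Nat.card_Icc]
    simp
  have hfinal : (A₂.card : ℝ) ≤ (K:ℝ) * (K:ℝ) := by
    rw [hprod] at hcard
    exact_mod_cast hcard
  have hKnn : (0:ℝ) ≤ (K:ℝ) := Nat.cast_nonneg _
  calc (A₂.card : ℝ) ≤ (K:ℝ) * (K:ℝ) := hfinal
    _ ≤ β * β := mul_le_mul hKβ hKβ hKnn (by linarith)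
    _ = α := hββ
end

section
/- Let P be a set of prime numbers and let G be a C₄-free graph on vertex set P (no cycle of length 4). Then the set B* := {p·q : pq is an edge of G} is a multiplicative Sidon set, and |B*| = e(G), i.e., distinct edges give distinct products. -/
/-- A set of naturals is multiplicative Sidon if it contains no four
distinct elements `a₁, a₂, b₁, b₂` with `a₁ * a₂ = b₁ * b₂`. -/
def MulSidonSet (S : Set ℕ) : Prop :=
  ¬ ∃ a₁ a₂ b₁ b₂, a₁ ∈ S ∧ a₂ ∈ S ∧ b₁ ∈ S ∧ b₂ ∈ S ∧
    a₁ ≠ a₂ ∧ a₁ ≠ b₁ ∧ a₁ ≠ b₂ ∧ a₂ ≠ b₁ ∧ a₂ ≠ b₂ ∧ b₁ ≠ b₂ ∧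
    a₁ * a₂ = b₁ * b₂

/-- A graph is `C₄`-free if it contains no cycle of length 4. -/
def C4Free {V : Type*} (G : SimpleGraph V) : Prop :=
  ¬ ∃ a b c d : V, a ≠ b ∧ a ≠ c ∧ a ≠ d ∧ b ≠ c ∧ b ≠ d ∧ c ≠ d ∧
    G.Adj a b ∧ G.Adj b c ∧ G.Adj c d ∧ G.Adj d a

private lemma two_prime {p q r s : ℕ} (hp : p.Prime) (hq : q.Prime) (hr : r.Prime)
    (hs : s.Prime) (h : p * q = r * s) : (p = r ∧ q = s) ∨ (p = s ∧ q = r) := by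
  have hd : r ∣ p * q := ⟨s, h⟩
  rcases (Nat.Prime.dvd_mul hr).mp hd with h' | h'
  · left
    have hpr : p = r := ((Nat.prime_dvd_prime_iff_eq hr hp).mp h').symm
    subst hpr
    exact ⟨rfl, Nat.eq_of_mul_eq_mul_left hp.pos h⟩
  · right
    have hqr : q = r := ((Nat.prime_dvd_prime_iff_eq hr hq).mp h').symm
    subst hqr
    have : p = s := Nat.eq_of_mul_eq_mul_left hq.pos
      (by linear_combination h)
    exact ⟨this, rfl⟩

private lemma step3 (G : SimpleGraph ℕ) (hp : ∀ a b : ℕ, G.Adj a b → Nat.Prime a)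
    (hC4 : C4Free G) (p₁ q₁ p₂ q₂ r₂ s₂ : ℕ)
    (e₁ : G.Adj p₁ q₁) (e₂ : G.Adj p₂ q₂) (f₁ : G.Adj p₁ p₂) (f₂ : G.Adj r₂ s₂)
    (h12 : p₁ * q₁ ≠ p₁ * p₂) (h22 : p₂ * q₂ ≠ p₁ * p₂)
    (heq : q₁ * q₂ = r₂ * s₂) : False := by
  have hq₁ := hp q₁ p₁ e₁.symm
  have hq₂ := hp q₂ p₂ e₂.symm
  have hr₂ := hp r₂ s₂ f₂
  have hs₂ := hp s₂ r₂ f₂.symm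
  have hA : G.Adj q₁ q₂ := by
    rcases two_prime hq₁ hq₂ hr₂ hs₂ heq with ⟨h1, h2⟩ | ⟨h1, h2⟩
    · rw [h1, h2]; exact f₂
    · rw [h1, h2]; exact f₂.symm
  refine hC4 ⟨p₁, q₁, q₂, p₂, e₁.ne, ?_, f₁.ne, hA.ne, ?_, (e₂.ne).symm.symm |>.symm, 
    e₁, hA, e₂.symm, f₁.symm⟩
  · intro h; subst h
    exact h22 (by linear_combination)
  · intro h; subst h
    exact h12 rfl

private lemma step2 (G : SimpleGraph ℕ) (hp : ∀ a b : ℕ, G.Adj a b → Nat.Prime a)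
    (hC4 : C4Free G) (p₁ q₁ p₂ q₂ s₁ r₂ s₂ : ℕ)
    (e₁ : G.Adj p₁ q₁) (e₂ : G.Adj p₂ q₂) (f₁ : G.Adj p₁ s₁) (f₂ : G.Adj r₂ s₂)
    (n11 : p₁ * q₁ ≠ p₁ * s₁) (n21 : p₂ * q₂ ≠ p₁ * s₁) (n22 : p₂ * q₂ ≠ r₂ * s₂)
    (heq : q₁ * (p₂ * q₂) = s₁ * (r₂ * s₂)) : False := by
  have hq₁ := hp q₁ p₁ e₁.symm
  have hp₂ := hp p₂ q₂ e₂
  have hq₂ := hp q₂ p₂ e₂.symm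
  have hs₁ := hp s₁ p₁ f₁.symm
  have hd : s₁ ∣ q₁ * (p₂ * q₂) := ⟨r₂ * s₂, heq⟩
  rcases (Nat.Prime.dvd_mul hs₁).mp hd with h | h
  · have hsq : s₁ = q₁ := (Nat.prime_dvd_prime_iff_eq hs₁ hq₁).mp h
    subst hsq
    exact n22 (Nat.eq_of_mul_eq_mul_left hs₁.pos heq)
  rcases (Nat.Prime.dvd_mul hs₁).mp h with h' | h'
  · have hsp : s₁ = p₂ := (Nat.prime_dvd_prime_iff_eq hs₁ hp₂).mp h'
    subst hsp
    have hc : q₁ * q₂ = r₂ * s₂ :=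
      Nat.eq_of_mul_eq_mul_left hs₁.pos (by linear_combination heq)
    exact step3 G hp hC4 p₁ q₁ s₁ q₂ r₂ s₂ e₁ e₂ f₁ f₂ n11 n21 hc
  · have hsq : s₁ = q₂ := (Nat.prime_dvd_prime_iff_eq hs₁ hq₂).mp h'
    subst hsq
    have hc : q₁ * p₂ = r₂ * s₂ :=
      Nat.eq_of_mul_eq_mul_left hs₁.pos (by linear_combination heq)
    exact step3 G hp hC4 p₁ q₁ s₁ p₂ r₂ s₂ e₁ e₂.symm f₁ f₂ n11
      (by intro h; exact n21 (by linear_combination h)) hc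

theorem c4free_prime_graph_mulSidon :
    ∀ G : SimpleGraph ℕ, (∀ a b : ℕ, G.Adj a b → Nat.Prime a) → C4Free G →
      MulSidonSet {x : ℕ | ∃ p q : ℕ, G.Adj p q ∧ x = p * q} ∧
      (∀ p q p' q' : ℕ, G.Adj p q → G.Adj p' q' → p * q = p' * q' →
        (p = p' ∧ q = q') ∨ (p = q' ∧ q = p')) := by
  intro G hp hC4
  constructor
  · rintro ⟨a₁, a₂, b₁, b₂, ⟨p₁, q₁, e₁, rfl⟩, ⟨p₂, q₂, e₂, rfl⟩, ⟨r₁, s₁, g₁, rfl⟩,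
      ⟨r₂, s₂, g₂, rfl⟩, n12, n13, n14, n23, n24, n34, heq⟩
    have hp₁ := hp p₁ q₁ e₁
    have hq₁ := hp q₁ p₁ e₁.symm
    have hp₂ := hp p₂ q₂ e₂
    have hq₂ := hp q₂ p₂ e₂.symm
    have hr₁ := hp r₁ s₁ g₁
    have hd : r₁ ∣ p₁ * q₁ * (p₂ * q₂) := ⟨s₁ * (r₂ * s₂), by linear_combination heq⟩
    rcases (Nat.Prime.dvd_mul hr₁).mp hd with h | h
    · rcases (Nat.Prime.dvd_mul hr₁).mp h with h' | h'
      · have : r₁ = p₁ := (Nat.prime_dvd_prime_iff_eq hr₁ hp₁).mp h'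
        subst this
        have hc : q₁ * (p₂ * q₂) = s₁ * (r₂ * s₂) :=
          Nat.eq_of_mul_eq_mul_left hr₁.pos (by linear_combination heq)
        exact step2 G hp hC4 r₁ q₁ p₂ q₂ s₁ r₂ s₂ e₁ e₂ g₁ g₂ n13 n23 n24 hc
      · have : r₁ = q₁ := (Nat.prime_dvd_prime_iff_eq hr₁ hq₁).mp h'
        subst this
        have hc : p₁ * (p₂ * q₂) = s₁ * (r₂ * s₂) :=
          Nat.eq_of_mul_eq_mul_left hr₁.pos (by linear_combination heq)
        exact step2 G hp hC4 r₁ p₁ p₂ q₂ s₁ r₂ s₂ e₁.symm e₂ g₁ g₂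
          (by intro h; exact n13 (by linear_combination h)) n23 n24 hc
    · rcases (Nat.Prime.dvd_mul hr₁).mp h with h' | h'
      · have : r₁ = p₂ := (Nat.prime_dvd_prime_iff_eq hr₁ hp₂).mp h'
        subst this
        have hc : q₂ * (p₁ * q₁) = s₁ * (r₂ * s₂) :=
          Nat.eq_of_mul_eq_mul_left hr₁.pos (by linear_combination heq)
        exact step2 G hp hC4 r₁ q₂ p₁ q₁ s₁ r₂ s₂ e₂ e₁ g₁ g₂ n23 n13 n14 hc
      · have : r₁ = q₂ := (Nat.prime_dvd_prime_iff_eq hr₁ hq₂).mp h'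
        subst this
        have hc : p₂ * (p₁ * q₁) = s₁ * (r₂ * s₂) :=
          Nat.eq_of_mul_eq_mul_left hr₁.pos (by linear_combination heq)
        exact step2 G hp hC4 r₁ p₂ p₁ q₁ s₁ r₂ s₂ e₂.symm e₁ g₁ g₂
          (by intro h; exact n23 (by linear_combination h)) n13 n14 hc
  · intro p q p' q' h h' heq
    exact two_prime (hp p q h) (hp q p h.symm) (hp p' q' h') (hp q' p' h'.symm) heq
end

section
/- For every even integer k ≥ 4 and every positive integer n, S_k(n) ≤ S₂(n) · ∑_{i=0}^{k/2 − 1} C(n, 4i), where C(n, j) denotes the binomial coefficient. In particular, S₄(n) ≤ S₂(n)·(1 + C(n,4)). -/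
open scoped Classical

/-- A finite set of naturals is multiplicative `k`-Sidon if it contains no `2k`
distinct elements `a₁, …, aₖ, b₁, …, bₖ` with `a₁⋯aₖ = b₁⋯bₖ`. -/
def MulKSidon (k : ℕ) (A : Finset ℕ) : Prop :=
  ¬ ∃ a b : Fin k → ℕ, (∀ i, a i ∈ A) ∧ (∀ i, b i ∈ A) ∧
    Function.Injective (Sum.elim a b) ∧ (∏ i, a i) = (∏ i, b i)

/-- `Sk k n`: the number of multiplicative `k`-Sidon subsets of `{1, …, n}`. -/
noncomputable def Sk (k n : ℕ) : ℕ :=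
  ((Finset.Icc 1 n).powerset.filter (fun A => MulKSidon k A)).card

/-!
Greedily strip from a multiplicative `l * m`-Sidon set `A` the union `S ∪ T` of two disjoint
`l`-element sets with equal products, until what is left is `l`-Sidon. The stripped collisions are
pairwise disjoint, so `m` of them would together form an `l * m`-collision in `A`; hence fewer than
`m` steps are needed, and `A = B ∪ C` with `B` an `l`-Sidon set and `#C = 2 * l * i` for some
`i < m`. Since `A` is determined by the pair `(B, C)`, counting pairs gives
`Sk (l * m) n ≤ Sk l n * ∑ i < m, C(n, 2li)`, and the theorem is the case `l = 2`.
-/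

open Finset

def IsMulCollision (k : ℕ) (S T : Finset ℕ) : Prop :=
  Disjoint S T ∧ #S = k ∧ #T = k ∧ ∏ x ∈ S, x = ∏ x ∈ T, x

theorem IsMulCollision.union {j l : ℕ} {S T S' T' : Finset ℕ} (h : IsMulCollision j S T)
    (h' : IsMulCollision l S' T') (hdisj : Disjoint (S ∪ T) (S' ∪ T')) :
    IsMulCollision (j + l) (S ∪ S') (T ∪ T') := by
  obtain ⟨hST, hS, hT, hprod⟩ := h
  obtain ⟨hS'T', hS', hT', hprod'⟩ := h'
  obtain ⟨⟨hSS', hST'⟩, hTS', hTT'⟩ :=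
    (disjoint_union_left.mp hdisj).imp disjoint_union_right.mp disjoint_union_right.mp
  refine ⟨?_, ?_, ?_, ?_⟩
  · exact disjoint_union_left.mpr ⟨disjoint_union_right.mpr ⟨hST, hST'⟩,
      disjoint_union_right.mpr ⟨hTS'.symm, hS'T'⟩⟩
  · rw [card_union_of_disjoint hSS', hS, hS']
  · rw [card_union_of_disjoint hTT', hT, hT']
  · rw [prod_union hSS', prod_union hTT', hprod, hprod']

theorem Finset.prod_orderIsoOfFin {α β : Type*} [LinearOrder α] [CommMonoid β] (s : Finset α)
    {k : ℕ} (h : #s = k) (f : α → β) : ∏ i, f (s.orderIsoOfFin h i) = ∏ x ∈ s, f x := by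
  rw [← prod_coe_sort s f]
  exact (s.orderIsoOfFin h).toEquiv.prod_comp fun x => f x

theorem mulKSidon_iff {k : ℕ} {A : Finset ℕ} :
    MulKSidon k A ↔ ∀ S ⊆ A, ∀ T ⊆ A, ¬ IsMulCollision k S T := by
  refine not_iff_comm.mp ⟨fun h => ?_, fun ⟨a, b, ha, hb, hinj, hprod⟩ => ?_⟩
  · push Not at h
    obtain ⟨S, hSA, T, hTA, hST, hS, hT, hprod⟩ := h
    refine ⟨fun i => S.orderIsoOfFin hS i, fun i => T.orderIsoOfFin hT i,
      fun i => hSA (S.orderIsoOfFin hS i).2, fun i => hTA (T.orderIsoOfFin hT i).2, ?_, ?_⟩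
    · refine Function.Injective.sumElim ?_ ?_ fun i j hij => disjoint_left.mp hST
        (S.orderIsoOfFin hS i).2 (hij ▸ (T.orderIsoOfFin hT j).2)
      · exact Subtype.val_injective.comp (S.orderIsoOfFin hS).injective
      · exact Subtype.val_injective.comp (T.orderIsoOfFin hT).injective
    · exact (S.prod_orderIsoOfFin hS id).trans (hprod.trans (T.prod_orderIsoOfFin hT id).symm)
  · have ha_inj : Function.Injective a := hinj.comp Sum.inl_injective
    have hb_inj : Function.Injective b := hinj.comp Sum.inr_injective
    push Not
    refine ⟨univ.image a, image_subset_iff.mpr fun i _ => ha i,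
      univ.image b, image_subset_iff.mpr fun i _ => hb i, ?_, ?_, ?_, ?_⟩
    · refine disjoint_left.mpr fun x hxa hxb => ?_
      obtain ⟨i, -, rfl⟩ := mem_image.mp hxa
      obtain ⟨j, -, hji⟩ := mem_image.mp hxb
      exact Sum.inr_ne_inl (hinj hji)
    · simp [card_image_of_injective _ ha_inj]
    · simp [card_image_of_injective _ hb_inj]
    · rwa [prod_image fun i _ j _ h => ha_inj h, prod_image fun i _ j _ h => hb_inj h]

theorem not_mulKSidon_zero (A : Finset ℕ) : ¬ MulKSidon 0 A := fun h =>
  mulKSidon_iff.mp h ∅ (empty_subset A) ∅ (empty_subset A) (by simp [IsMulCollision])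

theorem MulKSidon.sdiff_union_of_isMulCollision {j l : ℕ} {A S T : Finset ℕ}
    (hA : MulKSidon (j + l) A) (hSA : S ⊆ A) (hTA : T ⊆ A) (hST : IsMulCollision j S T) :
    MulKSidon l (A \ (S ∪ T)) := by
  refine mulKSidon_iff.mpr fun S' hS' T' hT' hST' => mulKSidon_iff.mp hA
    (S ∪ S') (union_subset hSA (hS'.trans sdiff_subset))
    (T ∪ T') (union_subset hTA (hT'.trans sdiff_subset)) (hST.union hST' ?_)
  exact disjoint_union_right.mpr ⟨(disjoint_of_subset_left hS' sdiff_disjoint).symm,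
    (disjoint_of_subset_left hT' sdiff_disjoint).symm⟩

theorem MulKSidon.exists_sdiff_mulKSidon {l : ℕ} :
    ∀ {m : ℕ} {A : Finset ℕ}, MulKSidon (l * m) A →
      ∃ i < m, ∃ C ⊆ A, #C = 2 * l * i ∧ MulKSidon l (A \ C)
  | 0, A, hA => (not_mulKSidon_zero A hA).elim
  | m + 1, A, hA => by
    by_cases hl : MulKSidon l A
    · exact ⟨0, m.succ_pos, ∅, empty_subset A, by simp, by simpa using hl⟩
    simp only [mulKSidon_iff, not_forall, not_not] at hl
    obtain ⟨S, hSA, T, hTA, hST⟩ := hl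
    rw [mul_add_one, add_comm] at hA
    obtain ⟨i, hi, C, hC, hCcard, hsdiff⟩ :=
      (hA.sdiff_union_of_isMulCollision hSA hTA hST).exists_sdiff_mulKSidon
    have hCST : Disjoint (S ∪ T) C := (disjoint_of_subset_left hC sdiff_disjoint).symm
    refine ⟨i + 1, by omega, S ∪ T ∪ C, union_subset (union_subset hSA hTA)
      (hC.trans sdiff_subset), ?_, by rwa [sdiff_sdiff_left] at hsdiff⟩
    obtain ⟨hdisj, hS, hT, -⟩ := hST
    rw [card_union_of_disjoint hCST, card_union_of_disjoint hdisj, hS, hT, hCcard]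
    ring

theorem Sk_mul_le (l m n : ℕ) :
    Sk (l * m) n ≤ Sk l n * ∑ i ∈ range m, n.choose (2 * l * i) := by
  set sidon := (Icc 1 n).powerset.filter (MulKSidon l)
  set small := (range m).biUnion fun i => (Icc 1 n).powersetCard (2 * l * i)
  have hsub : (Icc 1 n).powerset.filter (MulKSidon (l * m)) ⊆
      (sidon ×ˢ small).image fun p => p.1 ∪ p.2 := by
    intro A hA
    obtain ⟨hAn, hA⟩ := mem_filter.mp hA
    obtain ⟨i, hi, C, hCA, hC, hsdiff⟩ := hA.exists_sdiff_mulKSidon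
    refine mem_image.mpr ⟨(A \ C, C), mem_product.mpr ⟨?_, ?_⟩, sdiff_union_of_subset hCA⟩
    · exact mem_filter.mpr
        ⟨mem_powerset.mpr (sdiff_subset.trans (mem_powerset.mp hAn)), hsdiff⟩
    · exact mem_biUnion.mpr ⟨i, mem_range.mpr hi,
        mem_powersetCard.mpr ⟨hCA.trans (mem_powerset.mp hAn), hC⟩⟩
  have hsmall : #small ≤ ∑ i ∈ range m, n.choose (2 * l * i) :=
    card_biUnion_le.trans_eq (sum_congr rfl fun i _ => by simp)
  calc Sk (l * m) n ≤ #((sidon ×ˢ small).image fun p => p.1 ∪ p.2) := card_le_card hsub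
    _ ≤ #sidon * #small := card_image_le.trans_eq (card_product _ _)
    _ ≤ Sk l n * ∑ i ∈ range m, n.choose (2 * l * i) := Nat.mul_le_mul_left _ hsmall

theorem Sk_le_S2_mul_sum :
    ∀ k : ℕ, Even k → 4 ≤ k → ∀ n : ℕ, 0 < n →
      Sk k n ≤ Sk 2 n * ∑ i ∈ Finset.range (k / 2), n.choose (4 * i) := by
  rintro k ⟨m, rfl⟩ - n -
  rw [← two_mul, Nat.mul_div_cancel_left m two_pos]
  exact Sk_mul_le 2 m n
end
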